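/- arXiv:2507.16272 — 12 statements merged into one kernel-verified Lean document; each statement's English description precedes it below -/
import Mathlib

section
/- Let I be an ideal of ℝ[x] = MvPolynomial (Fin n) ℝ, let p ∈ ℝ[x], let z : Fin d → ℝ[x], and let M₁, M₂ be symmetric real d×d matrices such that M₁ is a Gram matrix for the constant polynomial 1 with respect to z mod I and M₂ is a Gram matrix for p with respect to z mod I. If γ ∈ ℝ is such that the matrix M₂ − γ·M₁ is positive semidefinite, then for every point x ∈ V_ℝ(I) one has eval x p ≥ γ. (Validity of a spectral relaxation: every γ feasible for the generalized-eigenvalue SDP is a lower bound for p on the variety.) -/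
open MvPolynomial Matrix

/-!
At a point `x` of the real variety every polynomial agrees with any representative of its class
mod `I`, so with `v = (eval x (z i))ᵢ` the Gram relations give `1 = vᵀ M₁ v` and
`eval x p = vᵀ M₂ v`. Positive semidefiniteness of `M₂ - γ • M₁` at `v` then reads
`γ = γ · vᵀ M₁ v ≤ vᵀ M₂ v = eval x p`.
-/

/-- `M` is a Gram matrix for `q` with respect to `z` mod `I` when `q - gramSum M z ∈ I`. -/
def gramSum {ι R A : Type*} [Fintype ι] [CommSemiring R] [Semiring A] [Module R A]
    (M : Matrix ι ι R) (z : ι → A) : A :=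
  ∑ i, ∑ j, M i j • (z i * z j)

theorem gramSum_eq_dotProduct_mulVec {ι R : Type*} [Fintype ι] [CommSemiring R]
    (M : Matrix ι ι R) (v : ι → R) : gramSum M v = v ⬝ᵥ M *ᵥ v := by
  simp only [gramSum, dotProduct, mulVec, Finset.mul_sum, smul_eq_mul]
  refine Finset.sum_congr rfl fun i _ => Finset.sum_congr rfl fun j _ => ?_
  ring

theorem MvPolynomial.eval_gramSum {ι σ R : Type*} [Fintype ι] [CommSemiring R]
    (x : σ → R) (M : Matrix ι ι R) (z : ι → MvPolynomial σ R) :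
    eval x (gramSum M z) = gramSum M (fun i => eval x (z i)) := by
  simp only [gramSum, map_sum, smul_eval, smul_eq_mul, map_mul]

theorem MvPolynomial.eval_eq_of_sub_mem {σ R : Type*} [CommRing R] {I : Ideal (MvPolynomial σ R)}
    {x : σ → R} (hx : ∀ g ∈ I, eval x g = 0) {q r : MvPolynomial σ R} (h : q - r ∈ I) :
    eval x q = eval x r :=
  sub_eq_zero.mp <| by simpa only [map_sub] using hx _ h

theorem Matrix.PosSemidef.mul_dotProduct_mulVec_le {ι R : Type*} [Fintype ι] [CommRing R]
    [PartialOrder R] [IsOrderedRing R] [StarRing R] [TrivialStar R]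
    {M₁ M₂ : Matrix ι ι R} {γ : R} (h : (M₂ - γ • M₁).PosSemidef) (v : ι → R) :
    γ * (v ⬝ᵥ M₁ *ᵥ v) ≤ v ⬝ᵥ M₂ *ᵥ v := by
  have hv := h.dotProduct_mulVec_nonneg v
  rw [star_trivial, sub_mulVec, smul_mulVec, dotProduct_sub, dotProduct_smul, smul_eq_mul,
    sub_nonneg] at hv
  exact hv

theorem spectral_relaxation_valid_general {n d : ℕ}
    (I : Ideal (MvPolynomial (Fin n) ℝ)) (p : MvPolynomial (Fin n) ℝ)
    (z : Fin d → MvPolynomial (Fin n) ℝ)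
    (M₁ M₂ : Matrix (Fin d) (Fin d) ℝ)
    (hM₁ : (1 : MvPolynomial (Fin n) ℝ) - ∑ i, ∑ j, M₁ i j • (z i * z j) ∈ I)
    (hM₂ : p - ∑ i, ∑ j, M₂ i j • (z i * z j) ∈ I)
    (γ : ℝ) (hγ : (M₂ - γ • M₁).PosSemidef) :
    ∀ x : Fin n → ℝ, (∀ g ∈ I, eval x g = 0) → γ ≤ eval x p := by
  intro x hx
  set v : Fin d → ℝ := fun i => eval x (z i)
  have hgram : ∀ (q : MvPolynomial (Fin n) ℝ) (M : Matrix (Fin d) (Fin d) ℝ),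
      q - gramSum M z ∈ I → eval x q = v ⬝ᵥ M *ᵥ v := fun q M h => by
    rw [eval_eq_of_sub_mem hx h, eval_gramSum, gramSum_eq_dotProduct_mulVec]
  have h₁ : 1 = v ⬝ᵥ M₁ *ᵥ v := by simpa only [map_one] using hgram 1 M₁ hM₁
  calc γ = γ * (v ⬝ᵥ M₁ *ᵥ v) := by rw [← h₁, mul_one]
    _ ≤ v ⬝ᵥ M₂ *ᵥ v := hγ.mul_dotProduct_mulVec_le v
    _ = eval x p := (hgram p M₂ hM₂).symm

/-- Validity of a spectral relaxation: if `M₁` is a Gram matrix for `1` and `M₂` a Gram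
matrix for `p` with respect to `z` mod `I`, and `M₂ - γ • M₁` is positive semidefinite,
then `γ` is a lower bound for `p` on the real variety of `I`. -/
theorem spectral_relaxation_valid {n d : ℕ}
    (I : Ideal (MvPolynomial (Fin n) ℝ)) (p : MvPolynomial (Fin n) ℝ)
    (z : Fin d → MvPolynomial (Fin n) ℝ)
    (M₁ M₂ : Matrix (Fin d) (Fin d) ℝ)
    (hM₁sym : M₁ᵀ = M₁) (hM₂sym : M₂ᵀ = M₂)
    (hM₁ : (1 : MvPolynomial (Fin n) ℝ) - ∑ i, ∑ j, M₁ i j • (z i * z j) ∈ I)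
    (hM₂ : p - ∑ i, ∑ j, M₂ i j • (z i * z j) ∈ I)
    (γ : ℝ) (hγ : (M₂ - γ • M₁).PosSemidef) :
    ∀ x : Fin n → ℝ, (∀ g ∈ I, eval x g = 0) → γ ≤ eval x p :=
  spectral_relaxation_valid_general I p z M₁ M₂ hM₁ hM₂ γ hγ
end

section
/- (Lemma 3.1.) Let I be an ideal of ℝ[x] = MvPolynomial (Fin n) ℝ and p ∈ ℝ[x]. Suppose there exist I-spherical polynomials h₁,…,h_m ∈ ℝ[x] such that the residue class of p in ℝ[x]/I lies in the ℝ-subalgebra of ℝ[x]/I generated by the residue classes of h₁,…,h_m (Algebra.adjoin ℝ of those classes). Then there exist d ∈ ℕ, a vector of polynomials z : Fin d → ℝ[x], a symmetric positive definite matrix M₁ ∈ ℝ^{d×d} and a symmetric matrix M₂ ∈ ℝ^{d×d} such that M₁ is a Gram matrix for 1 with respect to z mod I and M₂ is a Gram matrix for p with respect to z mod I. -/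
open MvPolynomial Matrix

set_option maxHeartbeats 1000000

/-- Lemma 3.1: if `p` mod `I` lies in the subalgebra generated by a family of
`I`-spherical polynomials, then there is a vector of polynomials `z` together with a
symmetric positive definite Gram matrix for `1` and a symmetric Gram matrix for `p`
with respect to `z` mod `I`. -/
theorem exists_spectral_relaxation {n m : ℕ}
    (I : Ideal (MvPolynomial (Fin n) ℝ)) (p : MvPolynomial (Fin n) ℝ)
    (h : Fin m → MvPolynomial (Fin n) ℝ)
    (hsph : (∑ i, h i ^ 2) - 1 ∈ I)
    (hp : Ideal.Quotient.mk I p ∈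
      Algebra.adjoin ℝ (Set.range fun i => Ideal.Quotient.mk I (h i))) :
    ∃ (d : ℕ) (z : Fin d → MvPolynomial (Fin n) ℝ)
      (M₁ M₂ : Matrix (Fin d) (Fin d) ℝ),
      M₁ᵀ = M₁ ∧ M₁.PosDef ∧ M₂ᵀ = M₂ ∧
      (1 : MvPolynomial (Fin n) ℝ) - ∑ i, ∑ j, M₁ i j • (z i * z j) ∈ I ∧
      p - ∑ i, ∑ j, M₂ i j • (z i * z j) ∈ I := by
  classical
  -- Extract the polynomial P with aeval h P ≡ p mod I
  rw [Algebra.adjoin_range_eq_range_aeval] at hp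
  obtain ⟨P, hP⟩ := hp
  have hpq : p - aeval h P ∈ I := by
    rw [← Ideal.Quotient.eq]
    have hc := comp_aeval (fun i => h i) (Ideal.Quotient.mkₐ ℝ I)
    have := congrArg (fun (φ : MvPolynomial (Fin m) ℝ →ₐ[ℝ] _) => φ P) hc
    simp only [AlgHom.comp_apply, Ideal.Quotient.mkₐ_eq_mk] at this
    rw [show (aeval h) P = (aeval fun i => h i) P from rfl, this]; exact hP.symm
  set N := P.totalDegree with hN
  set T : Finset (Fin (m+1) → ℕ) := Finset.piAntidiag Finset.univ N with hT
  set Z : (Fin (m+1) → ℕ) → MvPolynomial (Fin n) ℝ :=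
    fun k => ∏ i : Fin m, h i ^ k (Fin.succ i) with hZ
  set e : ↥T ≃ Fin T.card := T.equivFin with he
  -- multinomial expansion
  have expand : (1 + ∑ i, h i ^ 2) ^ N
      = ∑ k ∈ T, (Nat.multinomial Finset.univ k : MvPolynomial (Fin n) ℝ) * (Z k * Z k) := by
    have h1 : (1 : MvPolynomial (Fin n) ℝ) + ∑ i, h i ^ 2
        = ∑ i : Fin (m+1), Fin.cons 1 (fun j => h j ^ 2) i := by
      rw [Fin.sum_univ_succ, Fin.cons_zero]
      simp
    rw [h1, Finset.sum_pow_eq_sum_piAntidiag]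
    refine Finset.sum_congr rfl fun k hk => ?_
    congr 1
    rw [Fin.prod_univ_succ, Fin.cons_zero, one_pow, one_mul, hZ, ← Finset.prod_mul_distrib]
    exact Finset.prod_congr rfl fun i _ => by
      rw [Fin.cons_succ, ← pow_add, ← two_mul, pow_mul]
  -- (1+s)^N ≡ 2^N
  have hs1 : Ideal.Quotient.mk I (1 + ∑ i, h i ^ 2) = Ideal.Quotient.mk I 2 := by
    rw [Ideal.Quotient.eq]
    convert hsph using 1; ring
  have hpow : ((1 : MvPolynomial (Fin n) ℝ) + ∑ i, h i ^ 2) ^ N - 2 ^ N ∈ I := by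
    rw [← Ideal.Quotient.eq, map_pow, map_pow, hs1]
  -- degree bound
  have hdeg : ∀ α ∈ P.support, (∑ i, α i) ≤ N := by
    intro α hα
    have h1 : (α.sum fun _ e => e) ≤ N := le_totalDegree hα
    rwa [Finsupp.sum_fintype _ _ (fun _ => rfl)] at h1
  -- the two halves of a monomial
  set u : (Fin m →₀ ℕ) → (Fin (m+1) → ℕ) :=
    fun α => Fin.cons (N - ∑ i, α i / 2) (fun i => α i / 2) with hu
  set v : (Fin m →₀ ℕ) → (Fin (m+1) → ℕ) :=
    fun α => Fin.cons (N - ∑ i, (α i - α i / 2)) (fun i => α i - α i / 2) with hv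
  have hmemu : ∀ α ∈ P.support, u α ∈ T := by
    intro α hα
    rw [hT, Finset.mem_piAntidiag]
    refine ⟨?_, fun i _ => Finset.mem_univ i⟩
    rw [Fin.sum_univ_succ]
    simp only [hu, Fin.cons_zero, Fin.cons_succ]
    have h2 : (∑ i, α i / 2) ≤ N :=
      le_trans (Finset.sum_le_sum fun i _ => Nat.div_le_self _ _) (hdeg α hα)
    omega
  have hmemv : ∀ α ∈ P.support, v α ∈ T := by
    intro α hα
    rw [hT, Finset.mem_piAntidiag]
    refine ⟨?_, fun i _ => Finset.mem_univ i⟩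
    rw [Fin.sum_univ_succ]
    simp only [hv, Fin.cons_zero, Fin.cons_succ]
    have h2 : (∑ i, (α i - α i / 2)) ≤ N :=
      le_trans (Finset.sum_le_sum fun i _ => Nat.sub_le _ _) (hdeg α hα)
    omega
  have hZuv : ∀ α : Fin m →₀ ℕ, Z (u α) * Z (v α) = ∏ i, h i ^ α i := by
    intro α
    rw [hZ, ← Finset.prod_mul_distrib]
    refine Finset.prod_congr rfl fun i _ => ?_
    simp only [hu, hv, Fin.cons_succ]
    rw [← pow_add, Nat.add_sub_cancel' (Nat.div_le_self _ _)]
  -- expansion of q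
  have hq_eq : (aeval h) P = ∑ α ∈ P.support, P.coeff α • ∏ i, h i ^ α i := by
    rw [aeval_def, eval₂_eq']
    exact Finset.sum_congr rfl fun α _ => by rw [Algebra.smul_def]
  -- T is nonempty
  have hT0 : (Fin.cons N (0 : Fin m → ℕ) : Fin (m+1) → ℕ) ∈ T := by
    rw [hT, Finset.mem_piAntidiag]
    refine ⟨?_, fun i _ => Finset.mem_univ i⟩
    rw [Fin.sum_univ_succ]
    simp
  set u' : (Fin m →₀ ℕ) → ↥T := fun α =>
    if hα : u α ∈ T then ⟨u α, hα⟩ else ⟨_, hT0⟩ with hu'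
  set v' : (Fin m →₀ ℕ) → ↥T := fun α =>
    if hα : v α ∈ T then ⟨v α, hα⟩ else ⟨_, hT0⟩ with hv'
  have hu'c : ∀ α ∈ P.support, ((u' α : Fin (m+1) → ℕ)) = u α := by
    intro α hα; simp only [hu']; rw [dif_pos (hmemu α hα)]
  have hv'c : ∀ α ∈ P.support, ((v' α : Fin (m+1) → ℕ)) = v α := by
    intro α hα; simp only [hv']; rw [dif_pos (hmemv α hα)]
  -- the (pre-symmetrization) Gram matrix for p
  set A : Matrix ↥T ↥T ℝ := fun k l =>
    ∑ α ∈ P.support.filter (fun α => (u' α, v' α) = (k, l)), P.coeff α with hA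
  have hAsum : ∑ k : ↥T, ∑ l : ↥T, A k l • (Z ↑k * Z ↑l) = (aeval h) P := by
    have step1 : ∀ k l : ↥T, A k l • (Z ↑k * Z ↑l)
        = ∑ α ∈ P.support.filter (fun α => (u' α, v' α) = (k, l)),
            P.coeff α • (Z ↑(u' α) * Z ↑(v' α)) := by
      intro k l
      rw [hA, Finset.sum_smul]
      refine Finset.sum_congr rfl fun α hα => ?_
      obtain ⟨h1, h2⟩ := Prod.mk.injEq .. ▸ (Finset.mem_filter.mp hα).2
      rw [h1, h2]
    simp only [step1]
    have inner : ∀ k : ↥T,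
        (∑ l : ↥T, ∑ α ∈ P.support.filter (fun α => (u' α, v' α) = (k, l)),
          P.coeff α • (Z ↑(u' α) * Z ↑(v' α)))
        = ∑ α ∈ P.support.filter (fun α => u' α = k), P.coeff α • (Z ↑(u' α) * Z ↑(v' α)) := by
      intro k
      have hfl : ∀ l : ↥T, P.support.filter (fun α => (u' α, v' α) = (k, l))
          = (P.support.filter (fun α => u' α = k)).filter (fun α => v' α = l) := by
        intro l
        rw [Finset.filter_filter]
        apply Finset.filter_congr
        intro α _
        simp [Prod.ext_iff]
      simp only [hfl]
      exact Finset.sum_fiberwise_of_maps_to (fun α _ => Finset.mem_univ _) _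
    simp only [inner]
    rw [Finset.sum_fiberwise_of_maps_to (fun α _ => Finset.mem_univ _)]
    rw [hq_eq]
    refine Finset.sum_congr rfl fun α hα => ?_
    rw [hu'c α hα, hv'c α hα, hZuv]
  -- transpose identity for quadratic forms
  have transp_quad : ∀ B : Matrix ↥T ↥T ℝ,
      ∑ k : ↥T, ∑ l : ↥T, Bᵀ k l • (Z ↑k * Z ↑l) = ∑ k : ↥T, ∑ l : ↥T, B k l • (Z ↑k * Z ↑l) := by
    intro B
    rw [Finset.sum_comm]
    simp_rw [Matrix.transpose_apply]
    exact Finset.sum_congr rfl fun k _ => Finset.sum_congr rfl fun l _ => by rw [mul_comm]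
  -- final assembly
  refine ⟨T.card, fun i => Z ↑(e.symm i),
    Matrix.diagonal (fun i => (Nat.multinomial Finset.univ (e.symm i).1 : ℝ) / 2 ^ N),
    ((1/2 : ℝ) • (A + Aᵀ)).submatrix (fun i => e.symm i) (fun i => e.symm i),
    ?_, ?_, ?_, ?_, ?_⟩
  · exact Matrix.diagonal_transpose _
  · exact Matrix.PosDef.diagonal fun i =>
      div_pos (by exact_mod_cast Nat.multinomial_pos _ _) (by positivity)
  · rw [Matrix.transpose_submatrix]
    congr 1
    rw [Matrix.transpose_smul, Matrix.transpose_add, Matrix.transpose_transpose, add_comm Aᵀ A]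
  · -- Gram for 1
    have hdiag : (∑ i, ∑ j, Matrix.diagonal
          (fun i => (Nat.multinomial Finset.univ (e.symm i).1 : ℝ) / 2 ^ N) i j
            • (Z ↑(e.symm i) * Z ↑(e.symm j)))
        = ∑ i, ((Nat.multinomial Finset.univ (e.symm i).1 : ℝ) / 2 ^ N)
            • (Z ↑(e.symm i) * Z ↑(e.symm i)) := by
      refine Finset.sum_congr rfl fun i _ => ?_
      rw [Finset.sum_eq_single i]
      · rw [Matrix.diagonal_apply_eq]
      · intro j _ hj
        rw [Matrix.diagonal_apply_ne _ (Ne.symm hj), zero_smul]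
      · intro hi; exact absurd (Finset.mem_univ i) hi
    rw [hdiag]
    have hre : (∑ i, ((Nat.multinomial Finset.univ (e.symm i).1 : ℝ) / 2 ^ N)
            • (Z ↑(e.symm i) * Z ↑(e.symm i)))
        = ∑ k ∈ T, ((Nat.multinomial Finset.univ k : ℝ) / 2 ^ N) • (Z k * Z k) := by
      rw [← Finset.sum_coe_sort T
        (fun k => ((Nat.multinomial Finset.univ k : ℝ) / 2 ^ N) • (Z k * Z k))]
      exact Equiv.sum_comp e.symm
        (fun k : ↥T => ((Nat.multinomial Finset.univ k.1 : ℝ) / 2 ^ N) • (Z k.1 * Z k.1))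
    rw [hre]
    have hsum2 : (∑ k ∈ T, ((Nat.multinomial Finset.univ k : ℝ) / 2 ^ N) • (Z k * Z k))
        = ((2:ℝ) ^ N)⁻¹ • (1 + ∑ i, h i ^ 2) ^ N := by
      have cast_lemma : ∀ (a : ℕ) (x : MvPolynomial (Fin n) ℝ),
          ((a : ℝ) / 2 ^ N) • x = ((2:ℝ) ^ N)⁻¹ • ((a : MvPolynomial (Fin n) ℝ) * x) := by
        intro a x
        rw [div_eq_inv_mul, mul_smul]
        congr 1
        rw [Nat.cast_smul_eq_nsmul, nsmul_eq_mul]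
      rw [expand, Finset.smul_sum]
      exact Finset.sum_congr rfl fun k hk => cast_lemma _ _
    rw [hsum2]
    have h2s : ((2:ℝ) ^ N)⁻¹ • ((2 : MvPolynomial (Fin n) ℝ) ^ N) = 1 := by
      have h2a : ((2 : MvPolynomial (Fin n) ℝ)) ^ N = algebraMap ℝ _ ((2:ℝ) ^ N) := by
        rw [map_pow]; congr 1
      rw [h2a, Algebra.smul_def, ← _root_.map_mul, inv_mul_cancel₀ (by positivity), _root_.map_one]
    have key : (1 : MvPolynomial (Fin n) ℝ) - ((2:ℝ) ^ N)⁻¹ • (1 + ∑ i, h i ^ 2) ^ N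
        = ((2:ℝ) ^ N)⁻¹ • ((2 : MvPolynomial (Fin n) ℝ) ^ N - (1 + ∑ i, h i ^ 2) ^ N) := by
      rw [smul_sub, h2s]
    rw [key, Algebra.smul_def]
    refine Ideal.mul_mem_left _ _ ?_
    have hneg := I.neg_mem hpow
    rwa [neg_sub] at hneg
  · -- Gram for p
    have hre2 : (∑ i, ∑ j, (((1/2 : ℝ) • (A + Aᵀ)).submatrix
            (fun i => e.symm i) (fun i => e.symm i)) i j • (Z ↑(e.symm i) * Z ↑(e.symm j)))
        = ∑ k : ↥T, ∑ l : ↥T, ((1/2 : ℝ) • (A + Aᵀ)) k l • (Z ↑k * Z ↑l) := by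
      rw [← Equiv.sum_comp e.symm
        (fun k => ∑ l : ↥T, ((1/2 : ℝ) • (A + Aᵀ)) k l • (Z ↑k * Z ↑l))]
      refine Finset.sum_congr rfl fun i _ => ?_
      rw [← Equiv.sum_comp e.symm
        (fun l => ((1/2 : ℝ) • (A + Aᵀ)) (e.symm i) l • (Z ↑(e.symm i) * Z ↑l))]
      rfl
    rw [hre2]
    have expand2 : ∀ k l : ↥T, ((1/2 : ℝ) • (A + Aᵀ)) k l • (Z ↑k * Z ↑l)
        = (1/2 : ℝ) • (A k l • (Z ↑k * Z ↑l)) + (1/2 : ℝ) • (Aᵀ k l • (Z ↑k * Z ↑l)) := by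
      intro k l
      rw [Matrix.smul_apply, Matrix.add_apply, smul_eq_mul, mul_add, add_smul, mul_smul, mul_smul]
    have hsym : (∑ k : ↥T, ∑ l : ↥T, ((1/2 : ℝ) • (A + Aᵀ)) k l • (Z ↑k * Z ↑l))
        = ∑ k : ↥T, ∑ l : ↥T, A k l • (Z ↑k * Z ↑l) := by
      simp only [expand2, Finset.sum_add_distrib, ← Finset.smul_sum]
      rw [transp_quad A, ← add_smul]
      norm_num
    rw [hsym, hAsum]
    exact hpq
end

section
/- (Converse of Lemma 3.1.) Let I be an ideal of ℝ[x] = MvPolynomial (Fin n) ℝ, p ∈ ℝ[x], z : Fin d → ℝ[x], let M₁ ∈ ℝ^{d×d} be symmetric positive definite with M₁ a Gram matrix for 1 with respect to z mod I, and let M₂ ∈ ℝ^{d×d} be symmetric with M₂ a Gram matrix for p with respect to z mod I. Define z̃ : Fin d → ℝ[x] by z̃ᵢ := Σⱼ (√M₁) i j · z j, where √M₁ is the positive semidefinite square root of M₁. Then z̃₁,…,z̃_d are I-spherical (that is, Σᵢ z̃ᵢ² − 1 ∈ I), and the residue class of p in ℝ[x]/I belongs to the ℝ-subalgebra of ℝ[x]/I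 generated by the residue classes of z̃₁,…,z̃_d. -/
/-!
Since `√M₁` is symmetric with square `M₁`, the sum `Σᵢ z̃ᵢ²` is the Gram form of `M₁` in `z`,
which is `1` modulo `I`. Since `M₁` is positive definite, `√M₁` is invertible, so every `z k`
is a linear combination of the `z̃ᵢ`; modulo `I`, `p` is a quadratic form in the `z k`, hence a
polynomial in the `z̃ᵢ`.
-/

open MvPolynomial Matrix
open scoped MatrixOrder

theorem Matrix.sum_sq_sum_smul {m ι K R : Type*} [Fintype m] [Fintype ι] [CommSemiring K]
    [CommSemiring R] [Algebra K R] (S : Matrix m ι K) (z : ι → R) :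
    ∑ i, (∑ j, S i j • z j) ^ 2 = ∑ j, ∑ k, (Sᵀ * S) j k • (z j * z k) := by
  simp_rw [sq, Finset.sum_mul_sum, smul_mul_smul_comm, mul_apply, transpose_apply,
    Finset.sum_smul]
  rw [Finset.sum_comm]
  exact Finset.sum_congr rfl fun _ _ => Finset.sum_comm

theorem Matrix.sum_smul_sum_smul {l m ι K M : Type*} [Fintype m] [Fintype ι] [CommSemiring K]
    [AddCommMonoid M] [Module K M] (A : Matrix l m K) (S : Matrix m ι K) (z : ι → M) (k : l) :
    ∑ i, A k i • ∑ j, S i j • z j = ∑ j, (A * S) k j • z j := by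
  simp_rw [Finset.smul_sum, smul_smul, mul_apply, Finset.sum_smul]
  exact Finset.sum_comm

theorem Subalgebra.sum_smul_mem {K B ι : Type*} [CommSemiring K] [Semiring B] [Algebra K B]
    [Fintype ι] (A : Subalgebra K B) (c : ι → K) {w : ι → B} (hw : ∀ i, w i ∈ A) :
    ∑ i, c i • w i ∈ A :=
  A.sum_mem fun i _ => A.smul_mem (hw i) (c i)

theorem Subalgebra.sum_sum_smul_mul_mem {K B ι : Type*} [CommSemiring K] [Semiring B]
    [Algebra K B] [Fintype ι] (A : Subalgebra K B) (M : Matrix ι ι K) {w : ι → B}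
    (hw : ∀ i, w i ∈ A) : ∑ i, ∑ j, M i j • (w i * w j) ∈ A :=
  A.sum_mem fun i _ => A.sum_smul_mem (M i) fun j => A.mul_mem (hw i) (hw j)

theorem Algebra.mem_adjoin_range_sum_smul {K B ι : Type*} [CommSemiring K] [Semiring B]
    [Algebra K B] [Fintype ι] [DecidableEq ι] {S : Matrix ι ι K} (hS : IsUnit S) (w : ι → B)
    (k : ι) : w k ∈ adjoin K (Set.range fun i => ∑ j, S i j • w j) := by
  obtain ⟨A, hA⟩ := hS.exists_left_inv
  have hw : w k = ∑ i, A k i • ∑ j, S i j • w j := by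
    simp [sum_smul_sum_smul, hA, one_apply]
  rw [hw]
  exact Subalgebra.sum_smul_mem _ _ fun i => subset_adjoin ⟨i, rfl⟩

theorem Matrix.PosSemidef.transpose_sqrt_mul_sqrt {ι : Type*} [Fintype ι] [DecidableEq ι]
    {M : Matrix ι ι ℝ} (hM : M.PosSemidef) : (CFC.sqrt M)ᵀ * CFC.sqrt M = M := by
  rw [← conjTranspose_eq_transpose_of_trivial,
    (nonneg_iff_posSemidef.1 (CFC.sqrt_nonneg M)).1.eq, CFC.sqrt_mul_sqrt_self M hM.nonneg]

theorem Matrix.PosDef.isUnit_sqrt {ι : Type*} [Fintype ι] [DecidableEq ι]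
    {M : Matrix ι ι ℝ} (hM : M.PosDef) : IsUnit (CFC.sqrt M) :=
  (CFC.isUnit_sqrt_iff M hM.posSemidef.nonneg).2 hM.isUnit

theorem spectral_relaxation_converse_general {n d : ℕ}
    (I : Ideal (MvPolynomial (Fin n) ℝ)) (p : MvPolynomial (Fin n) ℝ)
    (z : Fin d → MvPolynomial (Fin n) ℝ)
    (M₁ M₂ : Matrix (Fin d) (Fin d) ℝ)
    (hM₁pd : M₁.PosDef)
    (hM₁ : (1 : MvPolynomial (Fin n) ℝ) - ∑ i, ∑ j, M₁ i j • (z i * z j) ∈ I)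
    (hM₂ : p - ∑ i, ∑ j, M₂ i j • (z i * z j) ∈ I)
    (zt : Fin d → MvPolynomial (Fin n) ℝ)
    (hzt : ∀ i, zt i = ∑ j, (CFC.sqrt M₁ i j) • z j) :
    ((∑ i, zt i ^ 2) - 1 ∈ I) ∧
    Ideal.Quotient.mk I p ∈
      Algebra.adjoin ℝ (Set.range fun i => Ideal.Quotient.mk I (zt i)) := by
  obtain rfl : zt = fun i => ∑ j, CFC.sqrt M₁ i j • z j := funext hzt
  refine ⟨?_, ?_⟩
  · rw [sum_sq_sum_smul, hM₁pd.posSemidef.transpose_sqrt_mul_sqrt, ← neg_sub]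
    exact I.neg_mem hM₁
  · let π := Ideal.Quotient.mkₐ ℝ I
    have hp : π p = π (∑ i, ∑ j, M₂ i j • (z i * z j)) := Ideal.Quotient.eq.mpr hM₂
    show π p ∈ Algebra.adjoin ℝ (Set.range fun i => π (∑ j, CFC.sqrt M₁ i j • z j))
    simp only [hp, map_sum, map_smul, map_mul]
    exact Subalgebra.sum_sum_smul_mul_mem _ M₂
      (Algebra.mem_adjoin_range_sum_smul hM₁pd.isUnit_sqrt _)

/-- Converse of Lemma 3.1: given a symmetric positive definite Gram matrix `M₁` for `1`
and a symmetric Gram matrix `M₂` for `p` with respect to `z` mod `I`, the polynomials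
`z̃ᵢ = Σⱼ (√M₁) i j • z j` are `I`-spherical and `p` mod `I` lies in the subalgebra
generated by their residue classes. -/
theorem spectral_relaxation_converse {n d : ℕ}
    (I : Ideal (MvPolynomial (Fin n) ℝ)) (p : MvPolynomial (Fin n) ℝ)
    (z : Fin d → MvPolynomial (Fin n) ℝ)
    (M₁ M₂ : Matrix (Fin d) (Fin d) ℝ)
    (hM₁pd : M₁.PosDef) (hM₂sym : M₂ᵀ = M₂)
    (hM₁ : (1 : MvPolynomial (Fin n) ℝ) - ∑ i, ∑ j, M₁ i j • (z i * z j) ∈ I)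
    (hM₂ : p - ∑ i, ∑ j, M₂ i j • (z i * z j) ∈ I)
    (zt : Fin d → MvPolynomial (Fin n) ℝ)
    (hzt : ∀ i, zt i = ∑ j, (CFC.sqrt M₁ i j) • z j) :
    ((∑ i, zt i ^ 2) - 1 ∈ I) ∧
    Ideal.Quotient.mk I p ∈
      Algebra.adjoin ℝ (Set.range fun i => Ideal.Quotient.mk I (zt i)) :=
  spectral_relaxation_converse_general I p z M₁ M₂ hM₁pd hM₁ hM₂ zt hzt
end

section
/- (Proposition 4.1.) Let I be an ideal of ℝ[x] = MvPolynomial (Fin n) ℝ. The following are equivalent: (i) the quadratic module of I is Archimedean in ℝ[x]/I, i.e., there exist N ∈ ℕ, s ∈ ℕ, and polynomials q₁,…,q_s ∈ ℝ[x] such that (C N − Σ_{i=1}^n Xᵢ²) − Σ_{j=1}^s qⱼ² ∈ I; (ii) there exist m ∈ ℕ and I-spherical polynomials h₁,…,h_m ∈ ℝ[x] (i.e., Σᵢ hᵢ² − 1 ∈ I) such that the ℝ-subalgebra of ℝ[x]/I generated by the residue classes of h₁,…,h_m equals all of ℝ[x]/I (Algebra.adjoin ℝ {⟦h₁⟧,…,⟦h_m⟧}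 = ⊤). -/
/-!
Call `a` bounded if `N - a ^ 2` is a sum of squares for some `N : ℕ`. The identities
`N * M - (a * b) ^ 2 = a ^ 2 * (M - b ^ 2) + M * (N - a ^ 2)` and
`2 * N + 2 * M - (a + b) ^ 2 = (a - b) ^ 2 + 2 * (N - a ^ 2) + 2 * (M - b ^ 2)` show that bounded
elements form a subalgebra of `ℝ[x]/I`; Archimedean means that every element is bounded, which for
an algebra generated by `x₁, …, xₙ` amounts to boundedness of `∑ xᵢ ^ 2`.
Spherical elements are bounded, since `1 - hⱼ ^ 2 = ∑_{i ≠ j} hᵢ ^ 2`; so spherical generators force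
the quotient to be Archimedean. Conversely, if `N - ∑ xᵢ ^ 2 = ∑ qⱼ ^ 2`, then
`(x, q, 1) / √(N + 1)` is a spherical family which still generates.
-/

open MvPolynomial

theorem IsSumSq.exists_fin_sum_sq_of_surjective {R A : Type*} [CommRing R] [CommRing A]
    {f : R →+* A} (hf : Function.Surjective f) {a : A} (ha : IsSumSq a) :
    ∃ (s : ℕ) (q : Fin s → R), a = ∑ j, f (q j) ^ 2 := by
  induction ha with
  | zero => exact ⟨0, ![], by simp⟩
  | @sq_add b t _ ih =>
    obtain ⟨s, q, rfl⟩ := ih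
    obtain ⟨c, rfl⟩ := hf b
    exact ⟨s + 1, Fin.cons c q, by simp [Fin.sum_univ_succ, sq]⟩

namespace Subring

variable (A : Type*) [CommRing A]

def sumSqBounded : Subring A where
  carrier := {a | ∃ N : ℕ, IsSumSq ((N : A) - a ^ 2)}
  zero_mem' := ⟨0, by simp⟩
  one_mem' := ⟨1, by simp⟩
  neg_mem' := by
    rintro a ⟨N, hN⟩
    exact ⟨N, by rwa [neg_sq]⟩
  add_mem' := by
    rintro a b ⟨N, hN⟩ ⟨M, hM⟩
    refine ⟨2 * N + 2 * M, ?_⟩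
    have h : ((2 * N + 2 * M : ℕ) : A) - (a + b) ^ 2
        = (a - b) * (a - b) + ((N - a ^ 2) + (N - a ^ 2)) + ((M - b ^ 2) + (M - b ^ 2)) := by
      push_cast; ring
    rw [h]
    exact ((IsSumSq.mul_self _).add (hN.add hN)).add (hM.add hM)
  mul_mem' := by
    rintro a b ⟨N, hN⟩ ⟨M, hM⟩
    refine ⟨N * M, ?_⟩
    have h : ((N * M : ℕ) : A) - (a * b) ^ 2 = (a * a) * (M - b ^ 2) + M * (N - a ^ 2) := by
      push_cast; ring
    rw [h]
    exact ((IsSumSq.mul_self a).mul hM).add ((IsSumSq.natCast M).mul hN)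

variable {A}

theorem mem_sumSqBounded_of_sum_sq_eq_one {ι : Type*} [Fintype ι] {h : ι → A}
    (hh : ∑ i, h i ^ 2 = 1) (j : ι) : h j ∈ sumSqBounded A := by
  classical
  refine ⟨1, ?_⟩
  rw [Nat.cast_one, ← hh, ← Finset.add_sum_erase _ _ (Finset.mem_univ j), add_sub_cancel_left]
  exact IsSumSq.sum_sq _ _

theorem exists_isSumSq_natCast_sub_sum_sq {ι : Type*} [Fintype ι] {x : ι → A}
    (hx : ∀ i, x i ∈ sumSqBounded A) : ∃ N : ℕ, IsSumSq ((N : A) - ∑ i, x i ^ 2) := by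
  choose N hN using hx
  refine ⟨∑ i, N i, ?_⟩
  rw [Nat.cast_sum, ← Finset.sum_sub_distrib]
  exact IsSumSq.sum fun i _ => hN i

end Subring

namespace Subalgebra

variable (A : Type*) [CommRing A] [Algebra ℝ A]

def sumSqBounded : Subalgebra ℝ A where
  __ := Subring.sumSqBounded A
  algebraMap_mem' r := by
    refine ⟨⌈r ^ 2⌉₊, ?_⟩
    have h : ((⌈r ^ 2⌉₊ : ℕ) : A) - algebraMap ℝ A r ^ 2
        = algebraMap ℝ A √(⌈r ^ 2⌉₊ - r ^ 2) * algebraMap ℝ A √(⌈r ^ 2⌉₊ - r ^ 2) := by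
      rw [← map_mul, Real.mul_self_sqrt (sub_nonneg.2 (Nat.le_ceil _))]
      simp
    rw [h]
    exact IsSumSq.mul_self _

variable {A}

theorem sumSqBounded_eq_top_of_sum_sq_eq_one {ι : Type*} [Fintype ι] {h : ι → A} (hh : ∑ i, h i ^ 2 = 1)
    (hgen : Algebra.adjoin ℝ (Set.range h) = ⊤) : sumSqBounded A = ⊤ := by
  rw [eq_top_iff, ← hgen, Algebra.adjoin_le_iff]
  rintro _ ⟨j, rfl⟩
  exact Subring.mem_sumSqBounded_of_sum_sq_eq_one hh j

end Subalgebra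

theorem Algebra.adjoin_range_smul {K A ι : Type*} [Field K] [CommRing A] [Algebra K A]
    {c : K} (hc : c ≠ 0) (g : ι → A) :
    Algebra.adjoin K (Set.range (c • g)) = Algebra.adjoin K (Set.range g) := by
  refine le_antisymm (Algebra.adjoin_le ?_) (Algebra.adjoin_le ?_) <;> rintro _ ⟨i, rfl⟩
  · exact Subalgebra.smul_mem _ (Algebra.subset_adjoin (Set.mem_range_self i)) c
  · rw [← inv_smul_smul₀ hc (g i)]
    exact Subalgebra.smul_mem _ (Algebra.subset_adjoin (Set.mem_range_self i)) c⁻¹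

section SphericalGenerators

variable {A : Type*} [CommRing A] [Algebra ℝ A]

theorem exists_spherical_generators_of_isSumSq {n : ℕ} {x : Fin n → A}
    (hx : Algebra.adjoin ℝ (Set.range x) = ⊤) {N : ℕ} (hN : IsSumSq ((N : A) - ∑ i, x i ^ 2)) :
    ∃ (m : ℕ) (h : Fin m → A), ∑ i, h i ^ 2 = 1 ∧ Algebra.adjoin ℝ (Set.range h) = ⊤ := by
  obtain ⟨s, q, hq⟩ := hN.exists_fin_sum_sq_of_surjective (f := RingHom.id A) Function.surjective_id
  simp only [RingHom.id_apply] at hq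
  set g : Fin (n + s + 1) → A := Fin.snoc (Fin.append x q) 1
  have hg : ∑ i, g i ^ 2 = algebraMap ℝ A (N + 1) := by
    simp only [g, Fin.sum_univ_castSucc, Fin.snoc_castSucc, Fin.snoc_last, Fin.sum_univ_add,
      Fin.append_left, Fin.append_right]
    rw [map_add, map_natCast, map_one, ← sub_add_cancel (N : A) (∑ i, x i ^ 2), hq]
    ring
  have hN1 : (0 : ℝ) < N + 1 := by positivity
  set c : ℝ := (√(N + 1))⁻¹
  refine ⟨n + s + 1, c • g, ?_, ?_⟩
  · have hc : c ^ 2 * (N + 1) = 1 := by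
      rw [inv_pow, Real.sq_sqrt hN1.le, inv_mul_cancel₀ hN1.ne']
    calc ∑ i, (c • g) i ^ 2 = c ^ 2 • ∑ i, g i ^ 2 := by
          simp only [Pi.smul_apply, smul_pow, Finset.smul_sum]
      _ = 1 := by rw [hg, Algebra.smul_def, ← map_mul, hc, map_one]
  · rw [Algebra.adjoin_range_smul (by positivity) g, eq_top_iff, ← hx, Algebra.adjoin_le_iff]
    rintro _ ⟨i, rfl⟩
    exact Algebra.subset_adjoin ⟨(i.castAdd s).castSucc, by simp [g]⟩

theorem exists_isSumSq_natCast_sub_sum_sq_iff {n : ℕ} {x : Fin n → A}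
    (hx : Algebra.adjoin ℝ (Set.range x) = ⊤) :
    (∃ N : ℕ, IsSumSq ((N : A) - ∑ i, x i ^ 2)) ↔
      ∃ (m : ℕ) (h : Fin m → A), ∑ i, h i ^ 2 = 1 ∧ Algebra.adjoin ℝ (Set.range h) = ⊤ := by
  refine ⟨fun ⟨N, hN⟩ => exists_spherical_generators_of_isSumSq hx hN, ?_⟩
  rintro ⟨m, h, hh, hgen⟩
  have hbdd := Subalgebra.sumSqBounded_eq_top_of_sum_sq_eq_one hh hgen
  exact Subring.exists_isSumSq_natCast_sub_sum_sq fun i =>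
    (hbdd ▸ Algebra.mem_top : x i ∈ Subalgebra.sumSqBounded A)

end SphericalGenerators

namespace Ideal

variable {R : Type*} [CommRing R] (I : Ideal R)

theorem exists_sub_sum_sq_mem_iff_isSumSq (p : R) :
    (∃ (s : ℕ) (q : Fin s → R), p - ∑ j, q j ^ 2 ∈ I) ↔ IsSumSq (Quotient.mk I p) := by
  simp_rw [← Quotient.eq, map_sum, map_pow]
  refine ⟨fun ⟨s, q, hq⟩ => hq ▸ IsSumSq.sum_sq _ _, fun hp => ?_⟩
  exact hp.exists_fin_sum_sq_of_surjective Quotient.mk_surjective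

theorem exists_sum_sq_sub_one_mem_iff (K : Type*) [CommRing K] [Algebra K R] :
    (∃ (m : ℕ) (h : Fin m → R), (∑ i, h i ^ 2) - 1 ∈ I ∧
      Algebra.adjoin K (Set.range fun i => Quotient.mk I (h i)) = ⊤) ↔
    ∃ (m : ℕ) (h : Fin m → R ⧸ I), ∑ i, h i ^ 2 = 1 ∧ Algebra.adjoin K (Set.range h) = ⊤ := by
  simp_rw [← Quotient.eq, map_sum, map_pow, map_one]
  refine ⟨fun ⟨m, h, hh⟩ => ⟨m, _, hh⟩, fun ⟨m, h, hh⟩ => ⟨m, fun i => (h i).out, ?_⟩⟩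
  simpa only [Quotient.mk_out] using hh

theorem adjoin_range_mk_X_eq_top {σ K : Type*} [CommRing K] (I : Ideal (MvPolynomial σ K)) :
    Algebra.adjoin K (Set.range fun i => Quotient.mk I (X i)) = ⊤ := by
  have h := Algebra.adjoin_image K (Quotient.mkₐ K I) (Set.range X)
  rw [adjoin_range_X, Algebra.map_top, ← Set.range_comp,
    (AlgHom.range_eq_top _).mpr (Quotient.mkₐ_surjective K I)] at h
  exact h

end Ideal

/-- Proposition 4.1: the quadratic module of `I` is Archimedean in `ℝ[x]/I` if and only
if there exist `I`-spherical polynomials whose residue classes generate `ℝ[x]/I` as an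
`ℝ`-algebra. -/
theorem archimedean_iff_spherical_generators {n : ℕ}
    (I : Ideal (MvPolynomial (Fin n) ℝ)) :
    (∃ (N : ℕ) (s : ℕ) (q : Fin s → MvPolynomial (Fin n) ℝ),
      (C (N : ℝ) - ∑ i, X i ^ 2) - ∑ j, q j ^ 2 ∈ I) ↔
    (∃ (m : ℕ) (h : Fin m → MvPolynomial (Fin n) ℝ),
      ((∑ i, h i ^ 2) - 1 ∈ I) ∧
      Algebra.adjoin ℝ (Set.range fun i => Ideal.Quotient.mk I (h i)) = ⊤) := by
  simp_rw [I.exists_sub_sum_sq_mem_iff_isSumSq, I.exists_sum_sq_sub_one_mem_iff ℝ, map_sub,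
    map_sum, map_pow, map_natCast]
  exact exists_isSumSq_natCast_sub_sum_sq_iff I.adjoin_range_mk_X_eq_top
end

section
/- (Proposition 4.2, part 1.) Let I be an ideal of ℝ[x] = MvPolynomial (Fin n) ℝ and let h₁,…,h_m ∈ ℝ[x] be I-spherical polynomials whose residue classes generate ℝ[x]/I as an ℝ-algebra. Define Φ : ℝⁿ → ℝᵐ by Φ(x) = (eval x h₁, …, eval x h_m). Then: (a) for every x ∈ V_ℝ(I), Σ_{i=1}^m (eval x hᵢ)² = 1, i.e., Φ maps V_ℝ(I) into the unit sphere of ℝᵐ; and (b) there exist polynomials q₁,…,q_n ∈ MvPolynomial (Fin m) ℝ such that for every x ∈ V_ℝ(I) and every j, eval (Φ x) q_j = x j; that is, the polynomial map Γ = (q₁,…,q_n) satisfies Γ ∘ Φ = id on V_ℝ(I). -/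
open MvPolynomial

/-- Proposition 4.2, part 1: the map `Φ = (h₁,…,h_m)` sends `V_ℝ(I)` into the unit
sphere of `ℝᵐ`, and there is a polynomial map `Γ = (q₁,…,q_n)` with `Γ ∘ Φ = id` on
`V_ℝ(I)`. -/
theorem spherical_map_into_sphere_with_inverse {n m : ℕ}
    (I : Ideal (MvPolynomial (Fin n) ℝ))
    (h : Fin m → MvPolynomial (Fin n) ℝ)
    (hsph : (∑ i, h i ^ 2) - 1 ∈ I)
    (hgen : Algebra.adjoin ℝ (Set.range fun i => Ideal.Quotient.mk I (h i)) = ⊤) :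
    (∀ x : Fin n → ℝ, (∀ g ∈ I, eval x g = 0) →
      ∑ i, (eval x (h i)) ^ 2 = 1) ∧
    (∃ q : Fin n → MvPolynomial (Fin m) ℝ,
      ∀ x : Fin n → ℝ, (∀ g ∈ I, eval x g = 0) →
        ∀ j, eval (fun i => eval x (h i)) (q j) = x j) := by
  constructor
  · intro x hx
    have := hx _ hsph
    have : eval x (∑ i, h i ^ 2) - eval x 1 = 0 := by
      rw [← map_sub]; exact this
    simpa [eval_sum, sub_eq_zero] using this
  · have key : ∀ j : Fin n, ∃ q : MvPolynomial (Fin m) ℝ,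
        (aeval h q) - X j ∈ I := by
      intro j
      have : Ideal.Quotient.mk I (X j) ∈
          Algebra.adjoin ℝ (Set.range fun i => Ideal.Quotient.mk I (h i)) := by
        rw [hgen]; trivial
      rw [Algebra.adjoin_range_eq_range_aeval] at this
      obtain ⟨q, hq⟩ := this
      refine ⟨q, ?_⟩
      have : Ideal.Quotient.mk I (aeval h q) = Ideal.Quotient.mk I (X j) := by
        rw [← hq, ← Ideal.Quotient.mkₐ_eq_mk ℝ I, comp_aeval_apply]
        rfl
      rwa [← sub_eq_zero, ← map_sub, Ideal.Quotient.eq_zero_iff_mem] at this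
    choose q hq using key
    refine ⟨q, fun x hx j => ?_⟩
    have h1 : eval x (aeval h (q j) - X j) = 0 := hx _ (hq j)
    have h2 : eval x (aeval h (q j)) = x j := by
      rw [map_sub, sub_eq_zero] at h1
      simpa using h1
    have h3 : aeval x (aeval h (q j)) = aeval (fun i => aeval x (h i)) (q j) :=
      comp_aeval_apply (φ := aeval x) (f := h) (p := q j)
    have hae : ∀ {k : ℕ} (y : Fin k → ℝ) (p : MvPolynomial (Fin k) ℝ),
        aeval y p = eval y p := fun y p => by rw [← coe_aeval_eq_eval]; rfl
    rw [hae, hae] at h3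
    simp only [hae] at h3
    rw [h3] at h2
    exact h2
end

section
/- (Proposition 4.2, part 2.) Let I be an ideal of ℝ[x] = MvPolynomial (Fin n) ℝ and let h₁,…,h_m ∈ ℝ[x] be I-spherical polynomials whose residue classes generate ℝ[x]/I as an ℝ-algebra. Define Φ : ℝⁿ → ℝᵐ by Φ(x) = (eval x h₁, …, eval x h_m), and let J be the ideal of MvPolynomial (Fin m) ℝ consisting of all f such that the substitution f(h₁,…,h_m) (i.e., MvPolynomial.aeval h applied to f) lies in I. Then the image of V_ℝ(I) under Φ equals the real variety V_ℝ(J) ⊆ ℝᵐ; in particular, Φ(V_ℝ(I)) is a real algebraic subvariety of the unit sphere in ℝᵐ. -/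
/-!
A point `y ∈ V(J)` is an `ℝ`-algebra map `ℝ[y] → ℝ` killing `J`, the kernel of the surjection
`ℝ[y] → ℝ[x]/I, yᵢ ↦ hᵢ`; it therefore descends to `ℝ[x]/I → ℝ`, i.e. to a point `x ∈ V(I)`,
and `Φ x = y` because the descended map sends `hᵢ` to `yᵢ`. Evaluating `∑ hᵢ² - 1 ∈ I` on
`V(I)` puts the image on the unit sphere.
-/

open MvPolynomial

namespace MvPolynomial

variable {R σ ι : Type*} [CommRing R]

theorem eval_aeval (x : σ → R) (h : ι → MvPolynomial σ R) (f : MvPolynomial ι R) :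
    eval x (aeval h f) = eval (fun i => eval x (h i)) f :=
  aeval_bind₁ x h f

theorem eval_algHom_comp_X (φ : MvPolynomial σ R →ₐ[R] R) (g : MvPolynomial σ R) :
    eval (φ ∘ X) g = φ g :=
  DFunLike.congr_fun (aeval_unique φ).symm g

theorem mkₐ_comp_aeval_surjective {I : Ideal (MvPolynomial σ R)} {h : ι → MvPolynomial σ R}
    (hgen : Algebra.adjoin R (Set.range fun i => Ideal.Quotient.mk I (h i)) = ⊤) :
    Function.Surjective ((Ideal.Quotient.mkₐ R I).comp (aeval h)) := by
  rw [← AlgHom.range_eq_top, comp_aeval, aeval_range]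
  exact hgen

theorem ker_mkₐ_comp_aeval (I : Ideal (MvPolynomial σ R)) (h : ι → MvPolynomial σ R) :
    RingHom.ker ((Ideal.Quotient.mkₐ R I).comp (aeval h)) = I.comap (aeval h) := by
  ext f
  simp [Ideal.Quotient.eq_zero_iff_mem]

theorem image_eval_zeroLocus_subset (I : Ideal (MvPolynomial σ R)) (h : ι → MvPolynomial σ R) :
    (fun x i => eval x (h i)) '' {x | ∀ g ∈ I, eval x g = 0} ⊆
      {y | ∀ f ∈ I.comap (aeval h), eval y f = 0} := by
  rintro _ ⟨x, hx, rfl⟩ f hf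
  rw [← eval_aeval]
  exact hx _ hf

theorem zeroLocus_comap_subset_image_eval {I : Ideal (MvPolynomial σ R)}
    {h : ι → MvPolynomial σ R}
    (hgen : Algebra.adjoin R (Set.range fun i => Ideal.Quotient.mk I (h i)) = ⊤) :
    {y | ∀ f ∈ I.comap (aeval h), eval y f = 0} ⊆
      (fun x i => eval x (h i)) '' {x | ∀ g ∈ I, eval x g = 0} := by
  intro y hy
  set ψ := (Ideal.Quotient.mkₐ R I).comp (aeval h)
  have hker : RingHom.ker ψ.toRingHom ≤ RingHom.ker (aeval y).toRingHom := by
    intro f hf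
    have hfJ : f ∈ I.comap (aeval h) := by rwa [← ker_mkₐ_comp_aeval]
    simpa [coe_aeval_eq_eval] using hy f hfJ
  let φ := AlgHom.liftOfSurjective ψ (mkₐ_comp_aeval_surjective hgen) (aeval y) hker
  have hx (g : MvPolynomial σ R) :
      eval (φ.comp (Ideal.Quotient.mkₐ R I) ∘ X) g = φ (Ideal.Quotient.mk I g) :=
    eval_algHom_comp_X _ g
  refine ⟨φ.comp (Ideal.Quotient.mkₐ R I) ∘ X, fun g hg => ?_, ?_⟩
  · rw [hx, Ideal.Quotient.eq_zero_iff_mem.mpr hg, map_zero]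
  · funext i
    have hψ : Ideal.Quotient.mk I (h i) = ψ (X i) := by simp [ψ]
    dsimp only
    rw [hx, hψ, AlgHom.liftOfSurjective_apply, aeval_X]

theorem image_eval_zeroLocus_eq_zeroLocus_comap {I : Ideal (MvPolynomial σ R)}
    {h : ι → MvPolynomial σ R}
    (hgen : Algebra.adjoin R (Set.range fun i => Ideal.Quotient.mk I (h i)) = ⊤) :
    (fun x i => eval x (h i)) '' {x | ∀ g ∈ I, eval x g = 0} =
      {y | ∀ f ∈ I.comap (aeval h), eval y f = 0} :=
  (image_eval_zeroLocus_subset I h).antisymm (zeroLocus_comap_subset_image_eval hgen)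

theorem sum_sq_eval_eq_one [Fintype ι] {I : Ideal (MvPolynomial σ R)}
    {h : ι → MvPolynomial σ R} (hsph : (∑ i, h i ^ 2) - 1 ∈ I) {x : σ → R}
    (hx : ∀ g ∈ I, eval x g = 0) :
    ∑ i, eval x (h i) ^ 2 = 1 := by
  have h0 := hx _ hsph
  simp only [map_sub, map_sum, map_pow, map_one] at h0
  exact sub_eq_zero.mp h0

end MvPolynomial

/-- Proposition 4.2, part 2: the image of `V_ℝ(I)` under `Φ = (h₁,…,h_m)` equals the
real variety of `J = (aeval h)⁻¹(I)`, a real algebraic subvariety of the unit sphere of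
`ℝᵐ`. -/
theorem spherical_map_image_eq_variety {n m : ℕ}
    (I : Ideal (MvPolynomial (Fin n) ℝ))
    (h : Fin m → MvPolynomial (Fin n) ℝ)
    (hsph : (∑ i, h i ^ 2) - 1 ∈ I)
    (hgen : Algebra.adjoin ℝ (Set.range fun i => Ideal.Quotient.mk I (h i)) = ⊤) :
    ((fun x : Fin n → ℝ => fun i => eval x (h i)) ''
        {x : Fin n → ℝ | ∀ g ∈ I, eval x g = 0} =
      {y : Fin m → ℝ |
        ∀ f ∈ Ideal.comap
          (MvPolynomial.aeval h : MvPolynomial (Fin m) ℝ →ₐ[ℝ] MvPolynomial (Fin n) ℝ) I,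
          eval y f = 0}) ∧
    ∀ y ∈ (fun x : Fin n → ℝ => fun i => eval x (h i)) ''
        {x : Fin n → ℝ | ∀ g ∈ I, eval x g = 0},
      ∑ i, y i ^ 2 = 1 := by
  refine ⟨image_eval_zeroLocus_eq_zeroLocus_comap hgen, ?_⟩
  rintro _ ⟨x, hx, rfl⟩
  exact sum_sq_eval_eq_one hsph hx
end

section
/- (Lemma 5.1, inclusion 𝒞 ⊆ 𝒮_k.) Let I be an ideal of ℝ[x] = MvPolynomial (Fin n) ℝ, let z : Fin d → ℝ[x], let M₁ ∈ ℝ^{d×d} be a symmetric Gram matrix for 1 with respect to z mod I, let w : Fin e → ℝ[x], and let N : Fin e → ℝ^{d×d} assign to each i a symmetric Gram matrix N i for the polynomial w i with respect to z mod I. Then for every x ∈ V_ℝ(I) there exists a positive semidefinite matrix X ∈ ℝ^{d×d} (namely X = z(x)·z(x)ᵀ, the outer product of the evaluation vector with itself) with ⟨M₁, X⟩ = 1 and ⟨N i, X⟩ = eval x (w i) for every i; that is, the point (eval x (w 1), …, eval x (w e)) lies in the spectratope {(⟨N 1, X⟩,…,⟨N e, X⟩) : X PSD, ⟨M₁, X⟩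 = 1}. -/
open MvPolynomial Matrix

theorem Matrix.trace_transpose_mul_vecMulVec {ι R : Type*} [Fintype ι] [CommSemiring R]
    (A : Matrix ι ι R) (u v : ι → R) :
    trace (Aᵀ * vecMulVec u v) = ∑ k, ∑ l, A k l * (u k * v l) := by
  simp only [trace, diag, mul_apply, transpose_apply, vecMulVec_apply]
  exact Finset.sum_comm

theorem MvPolynomial.eval_eq_gram_of_sub_mem {σ ι R : Type*} [Fintype ι] [CommRing R]
    {I : Ideal (MvPolynomial σ R)} {x : σ → R} (hx : ∀ g ∈ I, eval x g = 0)
    {q : MvPolynomial σ R} {z : ι → MvPolynomial σ R} {M : Matrix ι ι R}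
    (hq : q - ∑ k, ∑ l, M k l • (z k * z l) ∈ I) :
    eval x q = ∑ k, ∑ l, M k l * (eval x (z k) * eval x (z l)) := by
  have h := hx _ hq
  simp only [map_sub, map_sum, smul_eval, map_mul] at h
  exact sub_eq_zero.mp h

theorem variety_point_in_spectratope_general {n d e : ℕ}
    (I : Ideal (MvPolynomial (Fin n) ℝ))
    (z : Fin d → MvPolynomial (Fin n) ℝ)
    (M₁ : Matrix (Fin d) (Fin d) ℝ)
    (hM₁g : (1 : MvPolynomial (Fin n) ℝ) - ∑ i, ∑ j, M₁ i j • (z i * z j) ∈ I)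
    (w : Fin e → MvPolynomial (Fin n) ℝ)
    (N : Fin e → Matrix (Fin d) (Fin d) ℝ)
    (hNg : ∀ i, w i - ∑ k, ∑ l, N i k l • (z k * z l) ∈ I) :
    ∀ x : Fin n → ℝ, (∀ g ∈ I, eval x g = 0) →
      ∃ X : Matrix (Fin d) (Fin d) ℝ,
        X = Matrix.of (fun k l => eval x (z k) * eval x (z l)) ∧
        X.PosSemidef ∧ Matrix.trace (M₁ᵀ * X) = 1 ∧
        ∀ i, Matrix.trace ((N i)ᵀ * X) = eval x (w i) := by
  intro x hx
  set v : Fin d → ℝ := fun k => eval x (z k)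
  refine ⟨vecMulVec v v, rfl, ?_, ?_, fun i => ?_⟩
  · simpa only [star_trivial] using posSemidef_vecMulVec_self_star v
  · rw [trace_transpose_mul_vecMulVec, ← eval_eq_gram_of_sub_mem hx hM₁g, map_one]
  · rw [trace_transpose_mul_vecMulVec, ← eval_eq_gram_of_sub_mem hx (hNg i)]

/-- Lemma 5.1, inclusion 𝒞 ⊆ 𝒮ₖ: for every `x ∈ V_ℝ(I)` there is a positive
semidefinite matrix `X` (namely the outer product `z(x)·z(x)ᵀ`) with `⟨M₁, X⟩ = 1` and
`⟨N i, X⟩ = eval x (w i)` for every `i`. -/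
theorem variety_point_in_spectratope {n d e : ℕ}
    (I : Ideal (MvPolynomial (Fin n) ℝ))
    (z : Fin d → MvPolynomial (Fin n) ℝ)
    (M₁ : Matrix (Fin d) (Fin d) ℝ) (hM₁sym : M₁ᵀ = M₁)
    (hM₁g : (1 : MvPolynomial (Fin n) ℝ) - ∑ i, ∑ j, M₁ i j • (z i * z j) ∈ I)
    (w : Fin e → MvPolynomial (Fin n) ℝ)
    (N : Fin e → Matrix (Fin d) (Fin d) ℝ)
    (hNsym : ∀ i, (N i)ᵀ = N i)
    (hNg : ∀ i, w i - ∑ k, ∑ l, N i k l • (z k * z l) ∈ I) :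
    ∀ x : Fin n → ℝ, (∀ g ∈ I, eval x g = 0) →
      ∃ X : Matrix (Fin d) (Fin d) ℝ,
        X = Matrix.of (fun k l => eval x (z k) * eval x (z l)) ∧
        X.PosSemidef ∧ Matrix.trace (M₁ᵀ * X) = 1 ∧
        ∀ i, Matrix.trace ((N i)ᵀ * X) = eval x (w i) :=
  variety_point_in_spectratope_general I z M₁ hM₁g w N hNg
end

section
/- (Lemma 5.1, nesting 𝒮_{k+1} ⊆ 𝒮_k, matrix form.) Let M₁ ∈ ℝ^{d×d} be symmetric, let N : Fin e → ℝ^{d×d} be symmetric matrices, and let L be a real matrix indexed by (Fin m × Fin d) × Fin d'. Define M₁' := Lᵀ (I_m ⊗ M₁) L and N' i := Lᵀ (I_m ⊗ N i) L. Then for every positive semidefinite X' ∈ ℝ^{d'×d'} with ⟨M₁', X'⟩ = 1 there exists a positive semidefinite X ∈ ℝ^{d×d} with ⟨M₁, X⟩ = 1 and ⟨N i, X⟩ = ⟨N' i, X'⟩ for all i (one may take X to be the partial trace X j l = Σ_{i : Fin m} (L X' Lᵀ) (i,j) (i,l)). Consequently {(⟨N' 1, X'⟩,…,⟨N' e, X'⟩)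 : X' PSD, ⟨M₁', X'⟩ = 1} ⊆ {(⟨N 1, X⟩,…,⟨N e, X⟩) : X PSD, ⟨M₁, X⟩ = 1}. -/
open Matrix Kronecker

private theorem ptr_trace {d m : ℕ} (A : Matrix (Fin d) (Fin d) ℝ)
    (Y : Matrix (Fin m × Fin d) (Fin m × Fin d) ℝ) :
    Matrix.trace (Aᵀ * Matrix.of (fun j l => ∑ i : Fin m, Y (i, j) (i, l))) =
    Matrix.trace (((1 : Matrix (Fin m) (Fin m) ℝ) ⊗ₖ A)ᵀ * Y) := by
  simp [Matrix.trace, Matrix.mul_apply, Fintype.sum_prod_type, Matrix.one_apply,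
    Finset.mul_sum, Finset.sum_mul, ite_mul, ite_and]
  conv_rhs => enter [2, i]; rw [Finset.sum_comm]
  conv_lhs => rw [Finset.sum_comm]; enter [2, x]; rw [Finset.sum_comm]
  rw [Finset.sum_comm]

private theorem cyc_trace {d d' m : ℕ} (Q : Matrix (Fin m × Fin d) (Fin m × Fin d) ℝ)
    (L : Matrix (Fin m × Fin d) (Fin d') ℝ) (X' : Matrix (Fin d') (Fin d') ℝ) :
    Matrix.trace ((Lᵀ * Q * L)ᵀ * X') = Matrix.trace (Qᵀ * (L * X' * Lᵀ)) := by
  rw [Matrix.transpose_mul, Matrix.transpose_mul, Matrix.transpose_transpose,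
    Matrix.mul_assoc, Matrix.trace_mul_comm, ← Matrix.mul_assoc, ← Matrix.mul_assoc,
    Matrix.mul_assoc, Matrix.mul_assoc, Matrix.trace_mul_comm]

private theorem ptr_psd {d d' m : ℕ} (X' : Matrix (Fin d') (Fin d') ℝ) (hX' : X'.PosSemidef)
    (L : Matrix (Fin m × Fin d) (Fin d') ℝ) :
    (Matrix.of (fun j l => ∑ i : Fin m, (L * X' * Lᵀ) (i, j) (i, l))).PosSemidef := by
  set B : Fin m → Matrix (Fin d) (Fin d') ℝ := fun i => Matrix.of fun j c => L (i, j) c with hB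
  have hXeq : Matrix.of (fun j l => ∑ i : Fin m, (L * X' * Lᵀ) (i, j) (i, l)) =
      ∑ i : Fin m, B i * X' * (B i)ᵀ := by
    ext j l
    simp [Matrix.sum_apply, Matrix.mul_apply, hB, Finset.sum_mul]
  rw [hXeq]
  refine Finset.sum_induction _ _ (fun a b ha hb => ha.add hb) Matrix.PosSemidef.zero
    fun i _ => ?_
  have := hX'.mul_mul_conjTranspose_same (B i)
  simpa using this

/-- Lemma 5.1, nesting 𝒮_{k+1} ⊆ 𝒮ₖ in matrix form. -/
theorem spectratope_nesting {d d' m e : ℕ}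
    (M₁ : Matrix (Fin d) (Fin d) ℝ) (hM₁ : M₁ᵀ = M₁)
    (N : Fin e → Matrix (Fin d) (Fin d) ℝ) (hN : ∀ i, (N i)ᵀ = N i)
    (L : Matrix (Fin m × Fin d) (Fin d') ℝ) :
    (∀ X' : Matrix (Fin d') (Fin d') ℝ, X'.PosSemidef →
      Matrix.trace ((Lᵀ * ((1 : Matrix (Fin m) (Fin m) ℝ) ⊗ₖ M₁) * L)ᵀ * X') = 1 →
      ∃ X : Matrix (Fin d) (Fin d) ℝ,
        X = Matrix.of (fun j l => ∑ i : Fin m, (L * X' * Lᵀ) (i, j) (i, l)) ∧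
        X.PosSemidef ∧ Matrix.trace (M₁ᵀ * X) = 1 ∧
        ∀ i, Matrix.trace ((N i)ᵀ * X) =
          Matrix.trace ((Lᵀ * ((1 : Matrix (Fin m) (Fin m) ℝ) ⊗ₖ N i) * L)ᵀ * X')) ∧
    {y : Fin e → ℝ | ∃ X' : Matrix (Fin d') (Fin d') ℝ, X'.PosSemidef ∧
        Matrix.trace ((Lᵀ * ((1 : Matrix (Fin m) (Fin m) ℝ) ⊗ₖ M₁) * L)ᵀ * X') = 1 ∧
        ∀ i, y i = Matrix.trace ((Lᵀ * ((1 : Matrix (Fin m) (Fin m) ℝ) ⊗ₖ N i) * L)ᵀ * X')} ⊆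
      {y : Fin e → ℝ | ∃ X : Matrix (Fin d) (Fin d) ℝ, X.PosSemidef ∧
        Matrix.trace (M₁ᵀ * X) = 1 ∧
        ∀ i, y i = Matrix.trace ((N i)ᵀ * X)} := by
  have key : ∀ X' : Matrix (Fin d') (Fin d') ℝ,
      ∀ A : Matrix (Fin d) (Fin d) ℝ,
      Matrix.trace (Aᵀ * Matrix.of (fun j l => ∑ i : Fin m, (L * X' * Lᵀ) (i, j) (i, l))) =
      Matrix.trace ((Lᵀ * ((1 : Matrix (Fin m) (Fin m) ℝ) ⊗ₖ A) * L)ᵀ * X') := by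
    intro X' A
    rw [ptr_trace, cyc_trace]
  constructor
  · intro X' hX' htr
    refine ⟨_, rfl, ptr_psd X' hX' L, ?_, fun i => key X' (N i)⟩
    rw [key X' M₁, htr]
  · rintro y ⟨X', hX', htr, hy⟩
    refine ⟨Matrix.of (fun j l => ∑ i : Fin m, (L * X' * Lᵀ) (i, j) (i, l)),
      ptr_psd X' hX' L, ?_, fun i => ?_⟩
    · rw [key X' M₁, htr]
    · rw [hy i, key X' (N i)]
end

section
/- (Linear optimization over a spectratope base equals a generalized eigenvalue; equality of the primal SDP (5.2) and its dual.) Let A, B be symmetric real d×d matrices with B positive definite, and let b > 0. Then the infimum of ⟨A, X⟩ over all positive semidefinite X ∈ ℝ^{d×d} with ⟨B, X⟩ = b is attained and equals b · sSup {γ ∈ ℝ : (A − γ·B).PosSemidef}. -/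
open Matrix

/-! Conjugating by `B^{-1/2}` reduces to `B = 1`: if `μ` is the least eigenvalue of
`B^{-1/2} A B^{-1/2}` with unit eigenvector `u`, then `A - μ B ⪰ 0` and `w = B^{-1/2} u` satisfies
`wᵀ B w = 1`, `wᵀ A w = μ`; hence `μ` is the largest `γ` with `A - γ B ⪰ 0`. The matrix `X = b wwᵀ`
is feasible with value `b μ`, and weak duality `⟨A, Y⟩ - μ ⟨B, Y⟩ = ⟨A - μ B, Y⟩ ≥ 0`, the trace of
a product of two PSD matrices, shows that no feasible `Y` does better. -/

namespace Matrix

variable {n : Type*} [Fintype n]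

theorem trace_transpose_mul_vecMulVec_s14 (M : Matrix n n ℝ) (w : n → ℝ) :
    trace (Mᵀ * vecMulVec w w) = w ⬝ᵥ M *ᵥ w := by
  simp only [trace, diag_apply, mul_apply, vecMulVec_apply, dotProduct, mulVec, transpose_apply,
    Finset.mul_sum]
  rw [Finset.sum_comm]
  exact Finset.sum_congr rfl fun i _ => Finset.sum_congr rfl fun j _ => by ring

theorem mulVec_dotProduct_mulVec_mulVec (M T : Matrix n n ℝ) (u : n → ℝ) :
    (T *ᵥ u) ⬝ᵥ M *ᵥ (T *ᵥ u) = u ⬝ᵥ (Tᵀ * M * T) *ᵥ u := by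
  rw [← mulVec_mulVec, ← mulVec_mulVec, dotProduct_mulVec u, vecMul_transpose]

theorem posSemidef_sub_smul_iff_le {A B : Matrix n n ℝ} {μ : ℝ} {w : n → ℝ} (hB : B.PosSemidef)
    (hμ : (A - μ • B).PosSemidef) (hwB : w ⬝ᵥ B *ᵥ w = 1) (hwA : w ⬝ᵥ A *ᵥ w = μ) (γ : ℝ) :
    (A - γ • B).PosSemidef ↔ γ ≤ μ := by
  refine ⟨fun hγ => ?_, fun hγ => ?_⟩
  · have := hγ.dotProduct_mulVec_nonneg w
    rwa [star_trivial, sub_mulVec, dotProduct_sub, smul_mulVec, dotProduct_smul, hwB, hwA,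
      smul_eq_mul, mul_one, sub_nonneg] at this
  · rw [show A - γ • B = (A - μ • B) + (μ - γ) • B by rw [sub_smul]; abel]
    exact hμ.add (hB.smul (sub_nonneg.mpr hγ))

variable [DecidableEq n]

open scoped MatrixOrder

theorem trace_mul_nonneg_of_posSemidef {M N : Matrix n n ℝ} (hM : M.PosSemidef)
    (hN : N.PosSemidef) : 0 ≤ trace (M * N) := by
  have hS : (CFC.sqrt N)ᴴ = CFC.sqrt N := (CFC.sqrt_nonneg N).posSemidef.isHermitian.eq
  have := (hM.mul_mul_conjTranspose_same (CFC.sqrt N)).trace_nonneg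
  rwa [hS, trace_mul_cycle, CFC.sqrt_mul_sqrt_self N hN.nonneg, trace_mul_comm] at this

theorem mul_trace_le_of_posSemidef_sub_smul {A B Y : Matrix n n ℝ} {μ : ℝ}
    (hμ : (A - μ • B).PosSemidef) (hY : Y.PosSemidef) : μ * trace (Bᵀ * Y) ≤ trace (Aᵀ * Y) := by
  have := trace_mul_nonneg_of_posSemidef hμ.transpose hY
  rwa [transpose_sub, transpose_smul, sub_mul, trace_sub, smul_mul, trace_smul, smul_eq_mul,
    sub_nonneg] at this

theorem IsHermitian.exists_posSemidef_sub_smul_one [Nonempty n] {C : Matrix n n ℝ}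
    (hC : C.IsHermitian) :
    ∃ μ : ℝ, ∃ u : n → ℝ, (C - μ • 1).PosSemidef ∧ u ⬝ᵥ u = 1 ∧ u ⬝ᵥ C *ᵥ u = μ := by
  obtain ⟨i, hi⟩ := Finite.exists_min hC.eigenvalues
  refine ⟨hC.eigenvalues i, hC.eigenvectorBasis i, ?_, ?_, ?_⟩
  · rw [← Algebra.algebraMap_eq_smul_one, ← le_iff,
      algebraMap_le_iff_le_spectrum (ha := hC.isSelfAdjoint), hC.spectrum_real_eq_range_eigenvalues]
    rintro _ ⟨j, rfl⟩
    exact hi j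
  · have := real_inner_self_eq_norm_sq (hC.eigenvectorBasis i)
    rwa [EuclideanSpace.inner_eq_star_dotProduct, hC.eigenvectorBasis.orthonormal.1 i, star_trivial,
      one_pow] at this
  · simpa using (hC.eigenvalues_eq i).symm

theorem PosDef.exists_posSemidef_sub_smul [Nonempty n] {A B : Matrix n n ℝ} (hA : A.IsHermitian)
    (hB : B.PosDef) :
    ∃ μ : ℝ, ∃ w : n → ℝ, (A - μ • B).PosSemidef ∧ w ⬝ᵥ B *ᵥ w = 1 ∧ w ⬝ᵥ A *ᵥ w = μ := by
  set S := CFC.sqrt B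
  have hS : Sᴴ = S := (CFC.sqrt_nonneg B).posSemidef.isHermitian.eq
  have hSS : S * S = B := CFC.sqrt_mul_sqrt_self B hB.posSemidef.nonneg
  have hSdet : IsUnit S.det := (isUnit_iff_isUnit_det S).mp
    (CFC.isUnit_sqrt_iff_isStrictlyPositive.mpr hB.isStrictlyPositive)
  set T := S⁻¹
  have hTS : T * S = 1 := nonsing_inv_mul S hSdet
  have hST : S * T = 1 := mul_nonsing_inv S hSdet
  have hT : Tᴴ = T := by rw [conjTranspose_nonsing_inv, hS]
  have hTt : Tᵀ = T := by rw [← conjTranspose_eq_transpose_of_trivial, hT]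
  have hC : (T * A * T).IsHermitian := by
    simpa only [hT] using isHermitian_conjTranspose_mul_mul T hA
  obtain ⟨μ, u, hμ, hu, huC⟩ := hC.exists_posSemidef_sub_smul_one
  refine ⟨μ, T *ᵥ u, ?_, ?_, ?_⟩
  · have hconj : S * (T * A * T - μ • 1) * S = A - μ • B := by
      rw [mul_sub, sub_mul, ← hSS, Matrix.mul_smul, Matrix.smul_mul, mul_one,
        show S * (T * A * T) * S = S * T * A * (T * S) by noncomm_ring, hST, hTS, one_mul, mul_one]
    simpa only [hS, hconj] using hμ.mul_mul_conjTranspose_same S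
  · rw [mulVec_dotProduct_mulVec_mulVec, hTt, ← hSS,
      show T * (S * S) * T = T * S * (S * T) by noncomm_ring, hTS, hST, mul_one, one_mulVec, hu]
  · rw [mulVec_dotProduct_mulVec_mulVec, hTt, huC]

end Matrix

/-- Linear optimization over a spectratope base equals a generalized eigenvalue: the
infimum of `⟨A, X⟩` over PSD `X` with `⟨B, X⟩ = b` is attained and equals
`b · sSup {γ : (A − γ·B).PosSemidef}`. -/
theorem spectratope_base_inf_eq_gen_eig {d : ℕ} (hd : 0 < d)
    (A B : Matrix (Fin d) (Fin d) ℝ) (hA : Aᵀ = A) (hB : B.PosDef)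
    (b : ℝ) (hb : 0 < b) :
    ∃ X : Matrix (Fin d) (Fin d) ℝ, X.PosSemidef ∧ Matrix.trace (Bᵀ * X) = b ∧
      Matrix.trace (Aᵀ * X) =
        sInf {v : ℝ | ∃ Y : Matrix (Fin d) (Fin d) ℝ, Y.PosSemidef ∧
          Matrix.trace (Bᵀ * Y) = b ∧ Matrix.trace (Aᵀ * Y) = v} ∧
      Matrix.trace (Aᵀ * X) = b * sSup {γ : ℝ | (A - γ • B).PosSemidef} := by
  have : Nonempty (Fin d) := Fin.pos_iff_nonempty.mp hd
  obtain ⟨μ, w, hμ, hwB, hwA⟩ := hB.exists_posSemidef_sub_smul (isHermitian_iff_isSymm.mpr hA)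
  set X := b • vecMulVec w w
  have hX : X.PosSemidef := (posSemidef_vecMulVec_self_star w).smul hb.le
  have hXB : trace (Bᵀ * X) = b := by
    rw [Matrix.mul_smul, trace_smul, trace_transpose_mul_vecMulVec_s14, hwB, smul_eq_mul, mul_one]
  have hXA : trace (Aᵀ * X) = b * μ := by
    rw [Matrix.mul_smul, trace_smul, trace_transpose_mul_vecMulVec_s14, hwA, smul_eq_mul]
  have hleast : IsLeast {v : ℝ | ∃ Y : Matrix (Fin d) (Fin d) ℝ, Y.PosSemidef ∧
      trace (Bᵀ * Y) = b ∧ trace (Aᵀ * Y) = v} (b * μ) := by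
    refine ⟨⟨X, hX, hXB, hXA⟩, ?_⟩
    rintro _ ⟨Y, hY, hYB, rfl⟩
    have := mul_trace_le_of_posSemidef_sub_smul hμ hY
    rw [hYB] at this
    linarith
  have hsup : {γ : ℝ | (A - γ • B).PosSemidef} = Set.Iic μ :=
    Set.ext (posSemidef_sub_smul_iff_le hB.posSemidef hμ hwB hwA)
  exact ⟨X, hX, hXB, by rw [hXA, hleast.csInf_eq], by rw [hXA, hsup, csSup_Iic]⟩
end

section
/- (The optimal value of the spectral relaxation is an attained generalized eigenvalue.) Let A, B be symmetric real d×d matrices with B positive definite, and set γ* := sSup {γ ∈ ℝ : (A − γ·B).PosSemidef}. Then this set is nonempty, bounded above, and equals the interval (−∞, γ*]; in particular A − γ*·B is positive semidefinite, and there exists a nonzero vector v ∈ ℝ^d with A.mulVec v = γ* • (B.mulVec v), i.e., γ* is a generalized eigenvalue of the pair (A, B). -/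
/-!
The feasible set `{γ | A - γ • B ⪰ 0}` is a closed half-line: it is downward closed because
`B ⪰ 0`, closed as an intersection of the half-lines `γ * xᵀBx ≤ xᵀAx`, and bounded above because
`B ≻ 0`. The key fact is that a positive definite `P` stays positive semidefinite under small
symmetric perturbations `P - ε • Q`, by compactness of the unit sphere. Applied to `P = B` it shows
the feasible set is nonempty; applied to `P = A - γ* • B` it shows that this matrix cannot be
positive definite, so it is singular, and a kernel vector is a generalized eigenvector.
-/

open Matrix

namespace Matrix

variable {n : Type*}

theorem PosSemidef.sub_smul_of_le {A B : Matrix n n ℝ} (hB : B.PosSemidef) {γ γ' : ℝ}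
    (h : (A - γ • B).PosSemidef) (hle : γ' ≤ γ) : (A - γ' • B).PosSemidef := by
  convert h.add (hB.smul (sub_nonneg.2 hle)) using 1
  module

variable [Fintype n]

theorem smul_dotProduct_mulVec_smul (M : Matrix n n ℝ) (c : ℝ) (x : n → ℝ) :
    (c • x) ⬝ᵥ M *ᵥ (c • x) = c ^ 2 * (x ⬝ᵥ M *ᵥ x) := by
  simp only [mulVec_smul, smul_dotProduct, dotProduct_smul, smul_eq_mul]
  ring

theorem posSemidef_of_forall_norm_eq_one {M : Matrix n n ℝ} (hM : M.IsHermitian)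
    (h : ∀ x : n → ℝ, ‖x‖ = 1 → 0 ≤ x ⬝ᵥ M *ᵥ x) : M.PosSemidef := by
  refine .of_dotProduct_mulVec_nonneg hM fun x => ?_
  rcases eq_or_ne x 0 with rfl | hx
  · simp
  have hx' : ‖x‖ ≠ 0 := norm_ne_zero_iff.2 hx
  have hunit := h (‖x‖⁻¹ • x) (by rw [norm_smul, norm_inv, norm_norm, inv_mul_cancel₀ hx'])
  rw [smul_dotProduct_mulVec_smul] at hunit
  simpa using nonneg_of_mul_nonneg_right hunit (by positivity)

theorem PosDef.exists_pos_posSemidef_sub_smul {P Q : Matrix n n ℝ} (hP : P.PosDef)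
    (hQ : Q.IsHermitian) : ∃ ε : ℝ, 0 < ε ∧ (P - ε • Q).PosSemidef := by
  have hf : Continuous fun x : n → ℝ => x ⬝ᵥ P *ᵥ x / (1 + |x ⬝ᵥ Q *ᵥ x|) :=
    .div (by fun_prop) (by fun_prop) fun x => by positivity
  obtain ⟨ε, hε, hεf⟩ := (isCompact_sphere (0 : n → ℝ) 1).exists_forall_le' hf.continuousOn
    (a := 0) fun x hx => by
      have hx0 : x ≠ 0 := ne_zero_of_mem_unit_sphere ⟨x, hx⟩
      simpa using div_pos (hP.dotProduct_mulVec_pos hx0) (by positivity)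
  refine ⟨ε, hε, posSemidef_of_forall_norm_eq_one
    (hP.isHermitian.sub (hQ.smul (IsSelfAdjoint.all ε))) fun x hx => ?_⟩
  have hεx := hεf x (by simpa using hx)
  rw [le_div_iff₀ (by positivity)] at hεx
  rw [sub_mulVec, smul_mulVec, dotProduct_sub, dotProduct_smul, smul_eq_mul, sub_nonneg]
  calc ε * (x ⬝ᵥ Q *ᵥ x) ≤ ε * (1 + |x ⬝ᵥ Q *ᵥ x|) := by
        gcongr
        linarith [le_abs_self (x ⬝ᵥ Q *ᵥ x)]
    _ ≤ x ⬝ᵥ P *ᵥ x := hεx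

theorem isClosed_setOf_posSemidef_sub_smul {A B : Matrix n n ℝ} (hA : A.IsHermitian)
    (hB : B.IsHermitian) : IsClosed {γ : ℝ | (A - γ • B).PosSemidef} := by
  have hset : {γ : ℝ | (A - γ • B).PosSemidef} =
      ⋂ x : n → ℝ, {γ | γ * (x ⬝ᵥ B *ᵥ x) ≤ x ⬝ᵥ A *ᵥ x} := by
    ext γ
    simp only [Set.mem_ofPred_eq, Set.mem_iInter, posSemidef_iff_dotProduct_mulVec,
      hA.sub (hB.smul (IsSelfAdjoint.all γ)), true_and, star_trivial, sub_mulVec, smul_mulVec,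
      dotProduct_sub, dotProduct_smul, smul_eq_mul, sub_nonneg]
  rw [hset]
  exact isClosed_iInter fun x => isClosed_le (by fun_prop) continuous_const

theorem bddAbove_setOf_posSemidef_sub_smul [Nonempty n] {A B : Matrix n n ℝ} (hB : B.PosDef) :
    BddAbove {γ : ℝ | (A - γ • B).PosSemidef} := by
  obtain ⟨x, hx⟩ := exists_ne (0 : n → ℝ)
  have hBx : 0 < x ⬝ᵥ B *ᵥ x := by simpa using hB.dotProduct_mulVec_pos hx
  refine ⟨x ⬝ᵥ A *ᵥ x / (x ⬝ᵥ B *ᵥ x), fun γ hγ => ?_⟩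
  have := hγ.dotProduct_mulVec_nonneg x
  simp only [star_trivial, sub_mulVec, smul_mulVec, dotProduct_sub, dotProduct_smul,
    smul_eq_mul, sub_nonneg] at this
  rwa [le_div_iff₀ hBx]

theorem nonempty_setOf_posSemidef_sub_smul {A B : Matrix n n ℝ} (hA : A.IsHermitian)
    (hB : B.PosDef) : {γ : ℝ | (A - γ • B).PosSemidef}.Nonempty := by
  obtain ⟨ε, hε, h⟩ := hB.exists_pos_posSemidef_sub_smul hA.neg
  refine ⟨-ε⁻¹, ?_⟩
  show (A - (-ε⁻¹) • B).PosSemidef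
  convert h.smul (inv_nonneg.2 hε.le) using 1
  rw [smul_sub, smul_smul, inv_mul_cancel₀ hε.ne']
  module

theorem exists_mulVec_eq_smul_mulVec_of_isGreatest {A B : Matrix n n ℝ} (hB : B.PosDef) {γ : ℝ}
    (hγ : IsGreatest {γ : ℝ | (A - γ • B).PosSemidef} γ) :
    ∃ v ≠ 0, A *ᵥ v = γ • B *ᵥ v := by
  classical
  have hdet : (A - γ • B).det = 0 := by
    rw [← not_ne_iff, ← hγ.1.posDef_iff_det_ne_zero]
    intro hpos
    obtain ⟨ε, hε, h⟩ := hpos.exists_pos_posSemidef_sub_smul hB.isHermitian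
    rw [sub_sub, ← add_smul] at h
    linarith [hγ.2 h]
  obtain ⟨v, hv, hMv⟩ := exists_mulVec_eq_zero_iff.2 hdet
  exact ⟨v, hv, by rwa [sub_mulVec, smul_mulVec, sub_eq_zero] at hMv⟩

end Matrix

/-- The optimal value of the spectral relaxation is an attained generalized eigenvalue:
the feasible set `{γ : (A − γ·B).PosSemidef}` is nonempty, bounded above, equals
`(-∞, γ*]` for `γ* = sSup` of the set, `A − γ*·B` is PSD, and `γ*` is a generalized
eigenvalue of the pair `(A, B)`. -/
theorem gen_eig_attained {d : ℕ} (hd : 0 < d)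
    (A B : Matrix (Fin d) (Fin d) ℝ) (hA : Aᵀ = A) (hB : B.PosDef) :
    {γ : ℝ | (A - γ • B).PosSemidef}.Nonempty ∧
    BddAbove {γ : ℝ | (A - γ • B).PosSemidef} ∧
    {γ : ℝ | (A - γ • B).PosSemidef} =
      Set.Iic (sSup {γ : ℝ | (A - γ • B).PosSemidef}) ∧
    (A - sSup {γ : ℝ | (A - γ • B).PosSemidef} • B).PosSemidef ∧
    ∃ v : Fin d → ℝ, v ≠ 0 ∧
      A.mulVec v = sSup {γ : ℝ | (A - γ • B).PosSemidef} • B.mulVec v := by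
  have : Nonempty (Fin d) := Fin.pos_iff_nonempty.1 hd
  have hA' : A.IsHermitian := by rwa [IsHermitian, conjTranspose_eq_transpose_of_trivial]
  set S := {γ : ℝ | (A - γ • B).PosSemidef}
  have hne : S.Nonempty := nonempty_setOf_posSemidef_sub_smul hA' hB
  have hbdd : BddAbove S := bddAbove_setOf_posSemidef_sub_smul hB
  have hmax : IsGreatest S (sSup S) :=
    ⟨(isClosed_setOf_posSemidef_sub_smul hA' hB.isHermitian).csSup_mem hne hbdd,
      fun _ => (le_csSup hbdd ·)⟩
  have hIic : S = Set.Iic (sSup S) := Set.Subset.antisymm hmax.2 fun _ hγ =>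
    hB.posSemidef.sub_smul_of_le hmax.1 hγ
  exact ⟨hne, hbdd, hIic, hmax.1, exists_mulVec_eq_smul_mulVec_of_isGreatest hB hmax⟩
end

section
/- (Validity of Method 2: the congruence Gram matrix of 1 is positive definite.) Let I be an ideal of ℝ[x] = MvPolynomial (Fin n) ℝ, let h : Fin m → ℝ[x] be I-spherical, let κ ≥ 1, and let z : Fin d → ℝ[x]. Let P be a real matrix indexed by (Fin κ → Fin m) × Fin d with linearly independent columns (full column rank) such that for every multi-index f : Fin κ → Fin m, Σ_t P f t · z t − ∏_{s : Fin κ} h (f s) ∈ I (i.e., P z ≡ h^{⊗κ} mod I, entrywise). Then PᵀP is symmetric positive definite and is a Gram matrix for the constant polynomial 1 with respect to z mod I, i.e., 1 − Σ_{i,j} (PᵀP) i j · (z i)·(z j) ∈ I. -/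
open MvPolynomial Matrix

/-!
Modulo `I` the entries of `P z` coincide with those of `h^{⊗κ}`, and `h^{⊗κ}` is again
`I`-spherical because the sum of its squared entries is `(∑ i, hᵢ²)^κ`. Hence
`zᵀ (PᵀP) z = ‖P z‖² ≡ ‖h^{⊗κ}‖² ≡ 1` mod `I`, while `PᵀP` is positive definite since `P` is
injective.
-/

def Ideal.IsSpherical {R ι : Type*} [CommRing R] [Fintype ι] (I : Ideal R) (h : ι → R) : Prop :=
  ∑ i, h i ^ 2 - 1 ∈ I

namespace Ideal.IsSpherical

variable {R ι : Type*} [CommRing R] [Fintype ι] {I : Ideal R} {h : ι → R}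

theorem iff_quotient : I.IsSpherical h ↔ ∑ i, Quotient.mk I (h i) ^ 2 = 1 := by
  simp only [IsSpherical, ← Quotient.eq, map_sum, map_pow, map_one]

theorem of_sub_mem {g : ι → R} (hh : I.IsSpherical h) (hgh : ∀ i, g i - h i ∈ I) :
    I.IsSpherical g := by
  rw [iff_quotient] at hh ⊢
  simpa only [Quotient.eq.mpr (hgh _)] using hh

theorem tensorPower (hh : I.IsSpherical h) (κ : ℕ) :
    I.IsSpherical fun f : Fin κ → ι => ∏ s, h (f s) := by
  rw [iff_quotient] at hh ⊢
  simp only [map_prod, ← Finset.prod_pow]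
  rw [← one_pow κ, ← hh, Fintype.sum_pow]

end Ideal.IsSpherical

theorem Matrix.sum_transpose_mul_self_smul_mul {S A κ ι : Type*} [CommSemiring S]
    [CommSemiring A] [Algebra S A] [Fintype κ] [Fintype ι] (P : Matrix κ ι S) (z : ι → A) :
    ∑ i, ∑ j, (Pᵀ * P) i j • (z i * z j) = ∑ f, (∑ t, P f t • z t) ^ 2 := by
  simp only [sq, Finset.sum_mul_sum, smul_mul_smul_comm, mul_apply, transpose_apply,
    Finset.sum_smul]
  exact (Finset.sum_congr rfl fun _ _ => Finset.sum_comm).trans Finset.sum_comm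

theorem method2_valid_general {n m d : ℕ}
    (I : Ideal (MvPolynomial (Fin n) ℝ))
    (h : Fin m → MvPolynomial (Fin n) ℝ)
    (hsph : (∑ i, h i ^ 2) - 1 ∈ I)
    (κ : ℕ)
    (z : Fin d → MvPolynomial (Fin n) ℝ)
    (P : Matrix (Fin κ → Fin m) (Fin d) ℝ)
    (hP : LinearIndependent ℝ fun t : Fin d => fun f : Fin κ → Fin m => P f t)
    (hPz : ∀ f : Fin κ → Fin m, (∑ t, P f t • z t) - ∏ s, h (f s) ∈ I) :
    (Pᵀ * P)ᵀ = Pᵀ * P ∧ (Pᵀ * P).PosDef ∧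
    (1 : MvPolynomial (Fin n) ℝ) - ∑ i, ∑ j, (Pᵀ * P) i j • (z i * z j) ∈ I := by
  have hPosDef : (Pᵀ * P).PosDef := by
    simpa only [conjTranspose_eq_transpose_of_trivial] using
      PosDef.conjTranspose_mul_self P (mulVec_injective_iff.mpr hP)
  have hPzSpherical : I.IsSpherical fun f => ∑ t, P f t • z t :=
    (Ideal.IsSpherical.tensorPower hsph κ).of_sub_mem hPz
  refine ⟨by rw [transpose_mul, transpose_transpose], hPosDef, ?_⟩
  rw [sum_transpose_mul_self_smul_mul]
  exact sub_mem_comm_iff.mp hPzSpherical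

/-- Validity of Method 2: if `P` has full column rank and `P z ≡ h^{⊗κ}` mod `I`
entrywise, with `h` an `I`-spherical family, then `PᵀP` is symmetric positive definite
and is a Gram matrix for the constant polynomial `1` with respect to `z` mod `I`. -/
theorem method2_valid {n m d : ℕ}
    (I : Ideal (MvPolynomial (Fin n) ℝ))
    (h : Fin m → MvPolynomial (Fin n) ℝ)
    (hsph : (∑ i, h i ^ 2) - 1 ∈ I)
    (κ : ℕ) (hκ : 1 ≤ κ)
    (z : Fin d → MvPolynomial (Fin n) ℝ)
    (P : Matrix (Fin κ → Fin m) (Fin d) ℝ)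
    (hP : LinearIndependent ℝ fun t : Fin d => fun f : Fin κ → Fin m => P f t)
    (hPz : ∀ f : Fin κ → Fin m, (∑ t, P f t • z t) - ∏ s, h (f s) ∈ I) :
    (Pᵀ * P)ᵀ = Pᵀ * P ∧ (Pᵀ * P).PosDef ∧
    (1 : MvPolynomial (Fin n) ℝ) - ∑ i, ∑ j, (Pᵀ * P) i j • (z i * z j) ∈ I :=
  method2_valid_general I h hsph κ z P hP hPz
end

section
/- (Bounded-variety reduction, Section 4.2.) Let I = ⟨q₁,…,q_s⟩ ⊆ ℝ[x] = MvPolynomial (Fin n) ℝ and suppose V_ℝ(I) is contained in the closed Euclidean ball of radius R > 0, i.e., Σᵢ xᵢ² ≤ R² for all x ∈ V_ℝ(I). Let I' ⊆ MvPolynomial (Fin (n+1)) ℝ be the ideal generated by q₁,…,q_s (viewed as polynomials in the first n variables) together with R² − Σ_{i=1}^n Xᵢ² − Y², where Y denotes the added last variable. Then: (a) the n+1 polynomials (1/R)·X₁, …, (1/R)·X_n, (1/R)·Y are I'-spherical and their residue classes generate ℝ[x,y]/I' as an ℝ-algebra; (b) the projection (x, y) ↦ x maps V_ℝ(I') onto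 V_ℝ(I); consequently, for every p ∈ ℝ[x] (viewed in ℝ[x,y]), the set of values of p on V_ℝ(I') equals the set of values of p on V_ℝ(I). -/
open MvPolynomial

/-- Bounded-variety reduction (Section 4.2): adding the slack constraint
`R² − Σ Xᵢ² − Y² = 0` yields an ideal `I'` with `I'`-spherical generators
`(1/R)·X₁, …, (1/R)·Xₙ, (1/R)·Y` whose residue classes generate the quotient as an
`ℝ`-algebra; the projection maps `V_ℝ(I')` onto `V_ℝ(I)`, so every polynomial `p` in
the original variables takes the same set of values on both varieties. -/
theorem bounded_variety_reduction {n s : ℕ}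
    (q : Fin s → MvPolynomial (Fin n) ℝ)
    (R : ℝ) (hR : 0 < R)
    (hbound : ∀ x : Fin n → ℝ,
      (∀ g ∈ Ideal.span (Set.range q), eval x g = 0) → ∑ i, x i ^ 2 ≤ R ^ 2)
    (I' : Ideal (MvPolynomial (Fin (n + 1)) ℝ))
    (hI' : I' = Ideal.span
      (Set.range (fun j : Fin s => rename Fin.castSucc (q j)) ∪
        {C (R ^ 2) - ∑ i : Fin n, X i.castSucc ^ 2 - X (Fin.last n) ^ 2})) :
    ((∑ i : Fin (n + 1), (C (1 / R) * X i) ^ 2) - 1 ∈ I') ∧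
    Algebra.adjoin ℝ (Set.range fun i : Fin (n + 1) =>
      Ideal.Quotient.mk I' (C (1 / R) * X i)) = ⊤ ∧
    (fun y : Fin (n + 1) → ℝ => fun i : Fin n => y i.castSucc) ''
        {y : Fin (n + 1) → ℝ | ∀ g ∈ I', eval y g = 0} =
      {x : Fin n → ℝ | ∀ g ∈ Ideal.span (Set.range q), eval x g = 0} ∧
    ∀ p : MvPolynomial (Fin n) ℝ,
      (fun y : Fin (n + 1) → ℝ => eval y (rename Fin.castSucc p)) ''
          {y : Fin (n + 1) → ℝ | ∀ g ∈ I', eval y g = 0} =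
        (fun x : Fin n → ℝ => eval x p) ''
          {x : Fin n → ℝ | ∀ g ∈ Ideal.span (Set.range q), eval x g = 0} := by
  have hRne : R ≠ 0 := hR.ne'
  -- the slack generator
  set G : MvPolynomial (Fin (n + 1)) ℝ :=
    C (R ^ 2) - ∑ i : Fin n, X i.castSucc ^ 2 - X (Fin.last n) ^ 2 with hG
  have hGmem : G ∈ I' := by
    rw [hI']
    exact Ideal.subset_span (Or.inr rfl)
  -- Part 1
  have part1 : ((∑ i : Fin (n + 1), (C (1 / R) * X i) ^ 2) - 1 ∈ I') := by
    have h2 : (C ((1 / R) ^ 2) : MvPolynomial (Fin (n + 1)) ℝ) * C (R ^ 2) = 1 := by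
      rw [← C_mul]
      have : (1 / R) ^ 2 * R ^ 2 = 1 := by field_simp
      rw [this, C_1]
    have key : (∑ i : Fin (n + 1), (C (1 / R) * X i) ^ 2) - 1
        = C (-((1 / R) ^ 2)) * G := by
      rw [hG, map_neg, Fin.sum_univ_castSucc]
      simp only [mul_pow, ← C_pow]
      rw [neg_mul, mul_sub, mul_sub, Finset.mul_sum]
      linear_combination h2
    rw [key]
    exact Ideal.mul_mem_left _ _ hGmem
  -- Part 2
  have part2 : Algebra.adjoin ℝ (Set.range fun i : Fin (n + 1) =>
      Ideal.Quotient.mk I' (C (1 / R) * X i)) = ⊤ := by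
    set A := Algebra.adjoin ℝ (Set.range fun i : Fin (n + 1) =>
      Ideal.Quotient.mk I' (C (1 / R) * X i)) with hA
    have hCmem : ∀ a : ℝ, Ideal.Quotient.mk I' (C a) ∈ A := by
      intro a
      have : Ideal.Quotient.mk I' (C a) = algebraMap ℝ _ a := rfl
      rw [this]
      exact A.algebraMap_mem a
    have hXmem : ∀ i : Fin (n + 1), Ideal.Quotient.mk I' (X i) ∈ A := by
      intro i
      have hx : (X i : MvPolynomial (Fin (n + 1)) ℝ) = C R * (C (1 / R) * X i) := by
        rw [← mul_assoc, ← C_mul]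
        rw [mul_one_div_cancel hRne, C_1, one_mul]
      rw [hx, map_mul]
      exact mul_mem (hCmem R) (Algebra.subset_adjoin ⟨i, rfl⟩)
    rw [eq_top_iff]
    rintro z -
    obtain ⟨p, rfl⟩ := Ideal.Quotient.mk_surjective z
    induction p using MvPolynomial.induction_on with
    | C a => exact hCmem a
    | add p q hp hq => rw [map_add]; exact add_mem hp hq
    | mul_X p i hp => rw [map_mul]; exact mul_mem hp (hXmem i)
  -- Part 3
  have part3 : (fun y : Fin (n + 1) → ℝ => fun i : Fin n => y i.castSucc) ''
        {y : Fin (n + 1) → ℝ | ∀ g ∈ I', eval y g = 0} =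
      {x : Fin n → ℝ | ∀ g ∈ Ideal.span (Set.range q), eval x g = 0} := by
    apply Set.Subset.antisymm
    · rintro x ⟨y, hy, rfl⟩
      intro g hg
      have hle : Ideal.span (Set.range q) ≤
          Ideal.comap (rename (Fin.castSucc (n := n)) :
            MvPolynomial (Fin n) ℝ →ₐ[ℝ] MvPolynomial (Fin (n + 1)) ℝ).toRingHom I' := by
        rw [Ideal.span_le]
        rintro _ ⟨j, rfl⟩
        simp only [SetLike.mem_coe, Ideal.mem_comap, AlgHom.toRingHom_eq_coe,
          RingHom.coe_coe]
        rw [hI']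
        exact Ideal.subset_span (Or.inl ⟨j, rfl⟩)
      have hren : rename Fin.castSucc g ∈ I' := Ideal.mem_comap.mp (hle hg)
      have := hy _ hren
      rw [eval_rename] at this
      exact this
    · intro x hx
      have hsum : ∑ i, x i ^ 2 ≤ R ^ 2 := hbound x hx
      set t : ℝ := Real.sqrt (R ^ 2 - ∑ i, x i ^ 2) with ht
      have ht2 : t ^ 2 = R ^ 2 - ∑ i, x i ^ 2 :=
        Real.sq_sqrt (by linarith)
      refine ⟨Fin.snoc x t, ?_, ?_⟩
      · intro g hg
        rw [hI'] at hg
        have hle : (Set.range (fun j : Fin s => rename Fin.castSucc (q j)) ∪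
            {C (R ^ 2) - ∑ i : Fin n, X i.castSucc ^ 2 - X (Fin.last n) ^ 2}) ⊆
            (RingHom.ker (eval (Fin.snoc x t : Fin (n + 1) → ℝ)) : Set _) := by
          rintro g (⟨j, rfl⟩ | hg)
          · rw [SetLike.mem_coe, RingHom.mem_ker, eval_rename]
            have hcomp : (Fin.snoc x t : Fin (n + 1) → ℝ) ∘ Fin.castSucc = x := by
              funext i; simp
            rw [hcomp]
            exact hx _ (Ideal.subset_span ⟨j, rfl⟩)
          · rw [Set.mem_singleton_iff] at hg
            subst hg
            rw [SetLike.mem_coe, RingHom.mem_ker]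
            simp only [map_sub, eval_C, map_pow, eval_X, map_sum, Fin.snoc_castSucc,
              Fin.snoc_last]
            rw [ht2]; ring
        have := (Ideal.span_le.mpr hle) hg
        exact this
        
      · funext i
        simp
  refine ⟨part1, part2, part3, ?_⟩
  -- Part 4
  intro p
  rw [← part3, Set.image_image]
  apply Set.image_congr'
  intro y
  rw [eval_rename]
  rfl
end
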